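/- arXiv:math/0305333 — 5 statements merged into one kernel-verified Lean document; each statement's English description precedes it below -/
import Mathlib

section
/- Let D be an integral domain and let ⋆ be a semistar operation on D which is nontrivial (i.e. D^⋆ ≠ K) and of finite type (⋆ = ⋆_f). If I is a quasi-⋆-ideal of D and P is a prime ideal of D minimal over I, then P is a quasi-⋆-prime of D, that is, P^⋆ ∩ D = P. -/
open Pointwise

/-! Basic framework for semistar operations on an integral domain `D`
with quotient field `K`. Submodules of `K` play the role of the
`D`-submodules of the quotient field. -/

section Generic

variable (R : Type*) (K : Type*) [CommRing R] [Field K] [Algebra R K]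

/-- A semistar operation on `R` (with ambient field `K`): a map on the nonzero
`R`-submodules of `K` satisfying (⋆₁), (⋆₂), (⋆₃). The map is total on
`Submodule R K`, but the axioms are only imposed on nonzero submodules. -/
structure SemistarOp where
  toFun : Submodule R K → Submodule R K
  smul' : ∀ x : K, x ≠ 0 → ∀ E : Submodule R K, E ≠ ⊥ → toFun (x • E) = x • toFun E
  mono' : ∀ E F : Submodule R K, E ≠ ⊥ → F ≠ ⊥ → E ≤ F → toFun E ≤ toFun F
  le_star' : ∀ E : Submodule R K, E ≠ ⊥ → E ≤ toFun E
  idem' : ∀ E : Submodule R K, E ≠ ⊥ → toFun (toFun E) = toFun E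

variable {R K}

/-- The `R`-submodule of `K` generated by (the image of) an ideal of `R`. -/
def idealSub (I : Ideal R) : Submodule R K := Submodule.map (Algebra.linearMap R K) I

/-- The finite-type operation `⋆_f` associated to (the function underlying) a semistar
operation: `E^{⋆_f} = ∪ { F^⋆ : F nonzero finitely generated, F ⊆ E }`. -/
def starF (f : Submodule R K → Submodule R K) (E : Submodule R K) : Submodule R K :=
  sSup {G | ∃ F : Submodule R K, F.FG ∧ F ≠ ⊥ ∧ F ≤ E ∧ G = f F}

/-- `I` is a quasi-⋆-ideal: `I ≠ 0` and `I^⋆ ∩ R = I`. -/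
def QuasiIdeal (f : Submodule R K → Submodule R K) (I : Ideal R) : Prop :=
  I ≠ ⊥ ∧ Submodule.comap (Algebra.linearMap R K) (f (idealSub I)) = I

/-- `I` is a quasi-⋆-prime: a prime quasi-⋆-ideal. -/
def QuasiPrime (f : Submodule R K → Submodule R K) (I : Ideal R) : Prop :=
  QuasiIdeal f I ∧ I.IsPrime

/-- `I` is a quasi-⋆-maximal: maximal among proper quasi-⋆-ideals. -/
def QuasiMax (f : Submodule R K → Submodule R K) (I : Ideal R) : Prop :=
  QuasiIdeal f I ∧ I ≠ ⊤ ∧ ∀ J : Ideal R, QuasiIdeal f J → J ≠ ⊤ → I ≤ J → I = J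

/-- The localization `E·R_Q` of a submodule `E` of `K` at (the complement of) `Q`:
for prime `Q` this is `{x ∈ K : s·x ∈ E for some s ∉ Q}`. -/
def locSub (Q : Ideal R) (E : Submodule R K) : Submodule R K :=
  Submodule.span R {x : K | ∃ s : R, s ∉ Q ∧ algebraMap R K s * x ∈ E}

/-- The spectral semistar operation `⋆̃` associated to `⋆`:
`E^{⋆̃} = ∩ { E R_Q : Q quasi-⋆_f-maximal }` (equal to `K` if there are none). -/
def tildeOp (f : Submodule R K → Submodule R K) (E : Submodule R K) : Submodule R K :=
  ⨅ (Q : Ideal R) (_ : QuasiMax (starF f) Q), locSub Q E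

/-- The `v`-operation `E ↦ (R :_K (R :_K E))`. -/
def vOp (E : Submodule R K) : Submodule R K := 1 / (1 / E)

/-- The `t`-operation: the finite-type operation associated to `v`. -/
def tOp : Submodule R K → Submodule R K := starF (vOp (R := R) (K := K))

/-- `R` is a Prüfer ⋆-multiplication domain: every nonzero finitely generated ideal `F`
is ⋆_f-invertible, i.e. `(F·(R :_K F))^{⋆_f} = R^⋆`. -/
def PSMD (f : Submodule R K → Submodule R K) : Prop :=
  ∀ F : Ideal R, F ≠ ⊥ → F.FG →
    starF f (idealSub F * ((1 : Submodule R K) / idealSub F)) = f 1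

/-- The content ideal of a polynomial: the ideal generated by its coefficients. -/
def contentI (h : Polynomial R) : Ideal R := Ideal.span (Set.range h.coeff)

/-- The Nagata ring `Na(R,⋆) = R[X]_{N(⋆)}`, realized as the subset
`{g/h : g, h ∈ R[X], h ≠ 0, c(h)^⋆ = R^⋆}` of the field `K(X)` of rational functions. -/
def NaSet (f : Submodule R K → Submodule R K) : Set (RatFunc K) :=
  {x | ∃ g h : Polynomial R, h ≠ 0 ∧ f (idealSub (contentI h)) = f 1 ∧
    x * algebraMap (Polynomial K) (RatFunc K) (h.map (algebraMap R K)) =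
      algebraMap (Polynomial K) (RatFunc K) (g.map (algebraMap R K))}

/-- The Nagata ring as a subring of `K(X)` (the set `NaSet` is multiplicatively
saturated, so it coincides with the subring it generates). -/
noncomputable def NaSub (f : Submodule R K → Submodule R K) : Subring (RatFunc K) :=
  Subring.closure (NaSet f)

/-- A subset `S` of `K` is integrally closed (in `K`) if every element of `K` which is a root
of a monic polynomial with coefficients in `S` lies in `S`. -/
def IntClosedSet (S : Set K) : Prop :=
  ∀ x : K, (∃ p : Polynomial K, p.Monic ∧ (∀ n, p.coeff n ∈ S) ∧ p.eval x = 0) → x ∈ S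

/-- A subset `S` of `K` is seminormal if `x² ∈ S` and `x³ ∈ S` imply `x ∈ S`. -/
def SeminormalSet (S : Set K) : Prop := ∀ x : K, x ^ 2 ∈ S → x ^ 3 ∈ S → x ∈ S

/-- `T` is `(f,g)`-linked to `T` (case `D = T` of linkedness). -/
def LinkedSelf (f g : Submodule R K → Submodule R K) : Prop :=
  ∀ G : Ideal R, G ≠ ⊥ → G.FG → f (idealSub G) = f 1 → g (idealSub G) = g 1

end Generic

section Overring

variable {D : Type*} {K : Type*} [CommRing D] [Field K] [Algebra D K]

/-- The `T`-submodule `E·T` of `K` generated by a `D`-submodule `E` of `K`. -/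
def extT (T : Subalgebra D K) (E : Submodule D K) : Submodule ↥T K :=
  Submodule.span ↥T (E : Set K)

/-- `T` is `(⋆,⋆')`-linked to `D`: for every nonzero finitely generated integral ideal `F`
of `D`, `F^⋆ = D^⋆` implies `(FT)^{⋆'} = T^{⋆'}`. -/
def LinkedF (f : Submodule D K → Submodule D K) (T : Subalgebra D K)
    (g : Submodule ↥T K → Submodule ↥T K) : Prop :=
  ∀ F : Ideal D, F ≠ ⊥ → F.FG → f (idealSub F) = f 1 → g (extT T (idealSub F)) = g 1

/-- `T` is `t`-linked to `(D,⋆)`: `T` is `(⋆, t_T)`-linked to `D`. -/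
def TLinked (f : Submodule D K → Submodule D K) (T : Subalgebra D K) : Prop :=
  LinkedF f T (tOp (R := ↥T) (K := K))

/-- The semistar operation `ℓ_{⋆,T}` on `T`:
`E^ℓ = ∩ { E T_{D∖P} : P quasi-⋆_f-prime of D }` (equal to `K` if there are none). -/
def ellOp (f : Submodule D K → Submodule D K) (T : Subalgebra D K)
    (E : Submodule ↥T K) : Submodule ↥T K :=
  ⨅ (P : Ideal D) (_ : QuasiPrime (starF f) P),
    Submodule.span ↥T {x : K | ∃ r : D, r ∉ P ∧ algebraMap D K r * x ∈ E}

/-- The localization `D_P` of `D` at a prime `P`, as a subalgebra of `K`. -/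
def Dloc (P : Ideal D) : Subalgebra D K :=
  Algebra.adjoin D {x : K | ∃ r : D, r ∉ P ∧ algebraMap D K r * x ∈ (⊥ : Subalgebra D K)}

/-- The localization `T_{D∖P}` of an overring `T` at the multiplicative set `D∖P`,
as a subalgebra of `K`. -/
def TlocD (T : Subalgebra D K) (P : Ideal D) : Subalgebra D K :=
  Algebra.adjoin D {x : K | ∃ r : D, r ∉ P ∧ algebraMap D K r * x ∈ T}

/-- The localization `T_Q` of an overring `T` at a prime `Q` of `T`,
as a subalgebra of `K`. -/
def TlocQ (T : Subalgebra D K) (Q : Ideal ↥T) : Subalgebra D K :=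
  Algebra.adjoin D {x : K | ∃ t : ↥T, t ∉ Q ∧ (t : K) * x ∈ T}

/-- `T` is `(⋆,⋆')`-flat over `D`: `T` is `(⋆,⋆')`-linked to `D` and `D_{Q∩D} = T_Q`
for every quasi-⋆'_f-prime `Q` of `T`. -/
def FlatF (f : Submodule D K → Submodule D K) (T : Subalgebra D K)
    (g : Submodule ↥T K → Submodule ↥T K) : Prop :=
  LinkedF f T g ∧
    ∀ Q : Ideal ↥T, QuasiPrime (starF g) Q →
      Dloc (Q.comap (algebraMap D ↥T)) = TlocQ T Q

/-- `B` is a flat `A`-module (for subalgebras `A ⊆ B` of `K`, with the module structure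
coming from the inclusion). -/
def FlatPair (A B : Subalgebra D K) : Prop :=
  ∃ h : A ≤ B, @Module.Flat ↥A ↥B _ _ ((Subalgebra.inclusion h).toRingHom.toModule)

/-- `B` is a flat `A`-module, for subrings `A ⊆ B` of a commutative ring. -/
def FlatSubring {L : Type*} [CommRing L] (A B : Subring L) : Prop :=
  ∃ h : A ≤ B, @Module.Flat ↥A ↥B _ _ ((Subring.inclusion h).toModule)

end Overring

section AuxLemmas


lemma minPrime_pow_sat {D : Type*} [CommRing D] {I P : Ideal D} (hP : P ∈ I.minimalPrimes)
    {p : D} (hp : p ∈ P) : ∃ (n : ℕ) (s : D), s ∉ P ∧ s * p ^ n ∈ I := by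
  haveI hPp : P.IsPrime := hP.1.1
  by_contra hcon
  push_neg at hcon
  have hdisj : Disjoint (I : Set D) ((P.primeCompl ⊔ Submonoid.powers p : Submonoid D) : Set D) := by
    rw [Set.disjoint_left]
    rintro a haI haS
    rw [SetLike.mem_coe, Submonoid.mem_sup] at haS
    obtain ⟨s, hs, t, ⟨n, rfl⟩, rfl⟩ := haS
    exact hcon n s hs haI
  obtain ⟨Q, hQprime, hIQ, hQdisj⟩ := Ideal.exists_le_prime_disjoint I _ hdisj
  have hQP : Q ≤ P := by
    intro a ha
    by_contra h
    exact Set.disjoint_left.mp hQdisj ha (SetLike.le_def.mp le_sup_left h)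
  have hPQ : P ≤ Q := hP.2 ⟨hQprime, hIQ⟩ hQP
  exact Set.disjoint_left.mp hQdisj (hPQ hp)
    (SetLike.le_def.mp le_sup_right (Submonoid.mem_powers p))

/-- saturation of I at P -/
def satIdeal {D : Type*} [CommRing D] (I P : Ideal D) (hP : P.IsPrime) : Ideal D where
  carrier := {a | ∃ s, s ∉ P ∧ s * a ∈ I}
  add_mem' := by
    rintro a b ⟨u, hu, hua⟩ ⟨v, hv, hvb⟩
    refine ⟨u * v, fun h => (hP.mem_or_mem h).elim hu hv, ?_⟩
    have : u * v * (a + b) = v * (u * a) + u * (v * b) := by ring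
    rw [this]
    exact I.add_mem (I.mul_mem_left _ hua) (I.mul_mem_left _ hvb)
  zero_mem' := ⟨1, fun h => hP.ne_top (Ideal.eq_top_of_isUnit_mem _ h isUnit_one), by
    simpa using I.zero_mem⟩
  smul_mem' := by
    rintro c a ⟨u, hu, hua⟩
    refine ⟨u, hu, ?_⟩
    rw [smul_eq_mul, show u * (c * a) = c * (u * a) by ring]
    exact I.mul_mem_left _ hua

lemma common_denom {D : Type*} [CommRing D] {I P : Ideal D} (hP : P.IsPrime)
    {A : Ideal D} (hAfg : A.FG) (hA : A ≤ satIdeal I P hP) :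
    ∃ s, s ∉ P ∧ ∀ a ∈ A, s * a ∈ I := by
  classical
  obtain ⟨T, rfl⟩ := hAfg
  have key : ∀ T' : Finset D, (T' : Set D) ⊆ (satIdeal I P hP : Set D) →
      ∃ s, s ∉ P ∧ ∀ t ∈ T', s * t ∈ I := by
    intro T'
    induction T' using Finset.induction with
    | empty => exact fun _ => ⟨1, fun h => hP.ne_top (Ideal.eq_top_of_isUnit_mem _ h isUnit_one),
        fun t ht => absurd ht (Finset.notMem_empty t)⟩
    | @insert a T'' ha ih =>
      intro hsub
      obtain ⟨s, hs, hst⟩ := ih (fun x hx => hsub (Finset.mem_insert_of_mem hx))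
      obtain ⟨u, hu, hua⟩ := hsub (Finset.mem_insert_self a T'')
      refine ⟨s * u, fun h => (hP.mem_or_mem h).elim hs hu, ?_⟩
      intro t ht
      rcases Finset.mem_insert.mp ht with rfl | ht
      · rw [show s * u * t = s * (u * t) by ring]; exact I.mul_mem_left _ hua
      · rw [show s * u * t = u * (s * t) by ring]; exact I.mul_mem_left _ (hst t ht)
  obtain ⟨s, hs, hst⟩ := key T (fun t ht => hA (Ideal.subset_span ht))
  refine ⟨s, hs, fun a ha => ?_⟩
  induction ha using Submodule.span_induction with
  | mem t ht => exact hst t ht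
  | zero => simpa using I.zero_mem
  | add x y _ _ hx hy => rw [mul_add]; exact I.add_mem hx hy
  | smul c x _ hx =>
      rw [smul_eq_mul, show s * (c * x) = c * (s * x) by ring]
      exact I.mul_mem_left _ hx

lemma minPrime_fg_pow {D : Type*} [CommRing D] {I P : Ideal D} (hP : P ∈ I.minimalPrimes)
    {J : Ideal D} (hJfg : J.FG) (hJP : J ≤ P) :
    ∃ (n : ℕ) (s : D), 0 < n ∧ s ∉ P ∧ ∀ a ∈ J ^ n, s * a ∈ I := by
  have hPp : P.IsPrime := hP.1.1
  have hrad : J ≤ (satIdeal I P hPp).radical := by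
    intro p hp
    obtain ⟨n, s, hs, hsp⟩ := minPrime_pow_sat hP (hJP hp)
    exact ⟨n, s, hs, hsp⟩
  obtain ⟨n, hn⟩ := Ideal.exists_pow_le_of_le_radical_of_fg hrad hJfg
  obtain ⟨s, hs, hsa⟩ := common_denom hPp (Submodule.FG.pow hJfg (n + 1))
    (le_trans (Ideal.pow_le_pow_right (Nat.le_succ n)) hn)
  exact ⟨n + 1, s, Nat.succ_pos n, hs, hsa⟩


section StarAux2


variable {D : Type*} {K : Type*} [CommRing D] [Field K] [Algebra D K]

lemma smul_ne_bot' {x : K} (hx : x ≠ 0) {E : Submodule D K} (hE : E ≠ ⊥) : x • E ≠ ⊥ := by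
  obtain ⟨e, he, he0⟩ := E.ne_bot_iff.mp hE
  exact (x • E).ne_bot_iff.mpr ⟨x • e, Submodule.smul_mem_pointwise_smul e x E he,
    by simpa [smul_eq_mul] using mul_ne_zero hx he0⟩

lemma mul_ne_bot' {E F : Submodule D K} (hE : E ≠ ⊥) (hF : F ≠ ⊥) : E * F ≠ ⊥ := by
  obtain ⟨e, he, he0⟩ := E.ne_bot_iff.mp hE
  obtain ⟨f, hf, hf0⟩ := F.ne_bot_iff.mp hF
  exact (E * F).ne_bot_iff.mpr ⟨e * f, Submodule.mul_mem_mul he hf, mul_ne_zero he0 hf0⟩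

lemma pow_ne_bot' {E : Submodule D K} (hE : E ≠ ⊥) (n : ℕ) : E ^ (n + 1) ≠ ⊥ := by
  induction n with
  | zero => simpa [pow_one] using hE
  | succ m ih => rw [pow_succ]; exact mul_ne_bot' ih hE

lemma ssop_ne_bot (s : SemistarOp D K) {E : Submodule D K} (hE : E ≠ ⊥) : s.toFun E ≠ ⊥ :=
  fun h => hE (le_bot_iff.mp (h ▸ s.le_star' E hE))

lemma ssop_mul_right (s : SemistarOp D K) {E F : Submodule D K} (hE : E ≠ ⊥) (hF : F ≠ ⊥) :
    s.toFun E * F ≤ s.toFun (E * F) := by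
  rw [Submodule.mul_le]
  intro m hm n hn
  rcases eq_or_ne n 0 with rfl | hn0
  · simpa using (s.toFun (E * F)).zero_mem
  · have h1 : m * n ∈ n • s.toFun E := by
      have := Submodule.smul_mem_pointwise_smul m n (s.toFun E) hm
      rwa [smul_eq_mul, mul_comm] at this
    rw [← s.smul' n hn0 E hE] at h1
    have h2 : n • E ≤ E * F := by
      intro y hy
      rw [← SetLike.mem_coe, Submodule.coe_pointwise_smul, Set.mem_smul_set] at hy
      obtain ⟨e, he, rfl⟩ := hy
      have h3 : e * n ∈ E * F := Submodule.mul_mem_mul (show e ∈ E from he) hn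
      simpa [smul_eq_mul, mul_comm] using h3
    exact s.mono' _ _ (smul_ne_bot' hn0 hE) (mul_ne_bot' hE hF) h2 h1

lemma ssop_mul (s : SemistarOp D K) {E F : Submodule D K} (hE : E ≠ ⊥) (hF : F ≠ ⊥) :
    s.toFun E * s.toFun F ≤ s.toFun (E * F) := by
  have h1 : s.toFun E * s.toFun F ≤ s.toFun (E * s.toFun F) :=
    ssop_mul_right s hE (ssop_ne_bot s hF)
  have h2 : E * s.toFun F ≤ s.toFun (E * F) := by
    rw [mul_comm]
    exact le_trans (ssop_mul_right s hF hE) (le_of_eq (by rw [mul_comm]))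
  calc s.toFun E * s.toFun F ≤ s.toFun (E * s.toFun F) := h1
  _ ≤ s.toFun (s.toFun (E * F)) :=
      s.mono' _ _ (mul_ne_bot' hE (ssop_ne_bot s hF)) (ssop_ne_bot s (mul_ne_bot' hE hF)) h2
  _ = s.toFun (E * F) := s.idem' (E * F) (mul_ne_bot' hE hF)

lemma ssop_pow (s : SemistarOp D K) {E : Submodule D K} (hE : E ≠ ⊥) (n : ℕ) :
    (s.toFun E) ^ (n + 1) ≤ s.toFun (E ^ (n + 1)) := by
  induction n with
  | zero => simp
  | succ m ih =>
    calc (s.toFun E) ^ (m + 2) = (s.toFun E) ^ (m + 1) * s.toFun E := by rw [pow_succ]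
    _ ≤ s.toFun (E ^ (m + 1)) * s.toFun E := mul_le_mul' ih le_rfl
    _ ≤ s.toFun (E ^ (m + 1) * E) := ssop_mul s (pow_ne_bot' hE m) hE
    _ = s.toFun (E ^ (m + 2)) := by rw [← pow_succ]


end StarAux2
end AuxLemmas

/-- **Lemma 2.3 (d).** Let `⋆` be a nontrivial semistar operation of finite type on an
integral domain `D`. Every prime minimal over a quasi-⋆-ideal is a quasi-⋆-prime. -/
theorem minimalPrime_over_quasiIdeal_is_quasiPrime
    {D K : Type*} [CommRing D] [IsDomain D] [Field K] [Algebra D K] [IsFractionRing D K]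
    (s : SemistarOp D K)
    (hnontrivial : s.toFun 1 ≠ ⊤)
    (hfinite : ∀ E : Submodule D K, E ≠ ⊥ → s.toFun E = starF s.toFun E)
    (I : Ideal D) (hI : QuasiIdeal s.toFun I)
    (P : Ideal D) (hP : P ∈ I.minimalPrimes) :
    QuasiPrime s.toFun P := by
    classical
  have hinj : Function.Injective (algebraMap D K) := IsFractionRing.injective D K
  have hlinj : Function.Injective (Algebra.linearMap D K) := hinj
  have hPprime : P.IsPrime := hP.1.1
  have hIP : I ≤ P := hP.1.2
  have hIne : I ≠ ⊥ := hI.1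
  have hPne : P ≠ ⊥ := fun h => hIne (le_bot_iff.mp (h ▸ hIP))
  have idealSub_ne : ∀ J : Ideal D, J ≠ ⊥ → (idealSub J : Submodule D K) ≠ ⊥ := by
    intro J hJ
    obtain ⟨a, ha, ha0⟩ := (Submodule.ne_bot_iff J).mp hJ
    refine (Submodule.ne_bot_iff _).mpr ⟨algebraMap D K a, Submodule.mem_map_of_mem ha, ?_⟩
    exact fun h => ha0 (hinj (by simpa using h))
  have hPsub : (idealSub P : Submodule D K) ≠ ⊥ := idealSub_ne P hPne
  refine ⟨⟨hPne, le_antisymm ?_ ?_⟩, hPprime⟩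
  · intro x hx
    have hx' : algebraMap D K x ∈ s.toFun (idealSub P) := hx
    rw [hfinite _ hPsub] at hx'
    unfold starF at hx'
    have hSne : {G | ∃ F : Submodule D K, F.FG ∧ F ≠ ⊥ ∧ F ≤ idealSub P ∧
        G = s.toFun F}.Nonempty := by
      obtain ⟨a, ha, ha0⟩ := (Submodule.ne_bot_iff I).mp hIne
      refine ⟨s.toFun (Submodule.span D {algebraMap D K a}),
        Submodule.span D {algebraMap D K a}, Submodule.fg_span_singleton _, ?_, ?_, rfl⟩
      · rw [Ne, Submodule.span_singleton_eq_bot]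
        exact fun h => ha0 (hinj (by simpa using h))
      · rw [Submodule.span_le, Set.singleton_subset_iff]
        exact Submodule.mem_map_of_mem (hIP ha)
    have hSdir : DirectedOn (· ≤ ·) {G | ∃ F : Submodule D K, F.FG ∧ F ≠ ⊥ ∧
        F ≤ idealSub P ∧ G = s.toFun F} := by
      rintro G₁ ⟨F₁, h1fg, h1ne, h1le, rfl⟩ G₂ ⟨F₂, h2fg, h2ne, h2le, rfl⟩
      have hsupne : F₁ ⊔ F₂ ≠ ⊥ := fun h => h1ne (le_bot_iff.mp (h ▸ le_sup_left))
      exact ⟨s.toFun (F₁ ⊔ F₂), ⟨F₁ ⊔ F₂, h1fg.sup h2fg, hsupne, sup_le h1le h2le, rfl⟩,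
        s.mono' _ _ h1ne hsupne le_sup_left, s.mono' _ _ h2ne hsupne le_sup_right⟩
    obtain ⟨G, ⟨F, hFfg, hFne, hFP, rfl⟩, hxF⟩ :=
      (Submodule.mem_sSup_of_directed hSne hSdir).mp hx'
    set J : Ideal D := Submodule.comap (Algebra.linearMap D K) F with hJdef
    have hJsub : (idealSub J : Submodule D K) = F :=
      Submodule.map_comap_eq_self (le_trans hFP LinearMap.map_le_range)
    have hJfg : J.FG := Submodule.fg_of_fg_map_injective _ hlinj
      (by rw [show Submodule.map (Algebra.linearMap D K) J = F from hJsub]; exact hFfg)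
    have hJP : J ≤ P := by
      intro a ha
      obtain ⟨b, hb, hba⟩ := Submodule.mem_map.mp (hFP ha)
      exact hinj hba ▸ hb
    have hJne : J ≠ ⊥ := by
      intro h
      apply hFne
      rw [← hJsub, h, idealSub, Submodule.map_bot]
    have hJsubne : (idealSub J : Submodule D K) ≠ ⊥ := idealSub_ne J hJne
    obtain ⟨n, t, hn, htP, ht⟩ := minPrime_fg_pow hP hJfg hJP
    obtain ⟨m, rfl⟩ : ∃ m, n = m + 1 := ⟨n - 1, (Nat.succ_pred_eq_of_pos hn).symm⟩
    have hxJ : algebraMap D K x ∈ s.toFun (idealSub J) := by rw [hJsub]; exact hxF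
    have hxn : (algebraMap D K x) ^ (m + 1) ∈ s.toFun ((idealSub J : Submodule D K) ^ (m + 1)) :=
      ssop_pow s hJsubne m (Submodule.pow_mem_pow _ hxJ (m + 1))
    have hlin_eq : Algebra.linearMap D K = (Algebra.ofId D K).toLinearMap := by
      ext; rfl
    have hpowsub : (idealSub (J ^ (m + 1)) : Submodule D K) =
        (idealSub J : Submodule D K) ^ (m + 1) := by
      rw [idealSub, idealSub, hlin_eq, Submodule.map_pow]
    have htne : algebraMap D K t ≠ 0 := by
      intro h
      exact htP (by rw [show t = 0 from hinj (by simpa using h)]; exact P.zero_mem)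
    have hsm : algebraMap D K t • (idealSub (J ^ (m + 1)) : Submodule D K) ≤ idealSub I := by
      intro y hy
      rw [← SetLike.mem_coe, Submodule.coe_pointwise_smul, Set.mem_smul_set] at hy
      obtain ⟨z, hz, rfl⟩ := hy
      obtain ⟨a, ha, rfl⟩ := Submodule.mem_map.mp (show z ∈ Submodule.map
        (Algebra.linearMap D K) (J ^ (m + 1)) from hz)
      refine Submodule.mem_map.mpr ⟨t * a, ht a ha, ?_⟩
      simp [smul_eq_mul]
    have hfinal : algebraMap D K t * (algebraMap D K x) ^ (m + 1) ∈ s.toFun (idealSub I) := by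
      have h1 : algebraMap D K t * (algebraMap D K x) ^ (m + 1) ∈
          algebraMap D K t • s.toFun ((idealSub J : Submodule D K) ^ (m + 1)) := by
        have h0 := Submodule.smul_mem_pointwise_smul _ (algebraMap D K t) _ hxn
        simpa [smul_eq_mul] using h0
      rw [← s.smul' _ htne _ (pow_ne_bot' hJsubne m)] at h1
      have h2 : algebraMap D K t • (idealSub J : Submodule D K) ^ (m + 1) ≤ idealSub I := by
        rw [← hpowsub]; exact hsm
      exact s.mono' _ _ (smul_ne_bot' htne (pow_ne_bot' hJsubne m)) (idealSub_ne I hIne) h2 h1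
    have htx : t * x ^ (m + 1) ∈ I := by
      rw [← hI.2]
      exact Submodule.mem_comap.mpr (by simpa [map_mul, map_pow] using hfinal)
    have hxP : x ^ (m + 1) ∈ P := (hPprime.mem_or_mem (hIP htx)).resolve_left htP
    exact (hPprime.pow_mem_iff_mem (m + 1) (Nat.succ_pos m)).mp hxP
  · intro p hp
    exact Submodule.mem_comap.mpr (s.le_star' _ hPsub (Submodule.mem_map_of_mem hp))
end

section
/- Let D be an integral domain, T an overring of D, ⋆ a semistar operation on D and ⋆' a semistar operation on T. The following are equivalent: (i) T is (⋆,⋆')-linked to D; (ii) for each nonzero ideal I of D, I^{⋆_f} = D^⋆ implies (IT)^{⋆'_f} = T^{⋆'}; (iii) for each quasi-⋆'_f-ideal J of T with J ≠ T, (J ∩ D)^{⋆_f} ≠ D^⋆; (iv) for each quasi-⋆'_f-prime ideal Q of T, (Q ∩ D)^{⋆_f} ≠ D^⋆; (v) for each quasi-⋆'_f-maximal ideal N of T, (N ∩ D)^{⋆_f} ≠ D^⋆. -/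
open Pointwise

/-! ### Auxiliary lemmas -/

section AuxGeneric

variable {R K : Type*} [CommRing R] [Field K] [Algebra R K]

lemma aux_one_ne_bot : (1 : Submodule R K) ≠ ⊥ := by
  intro h
  have h1 : (1:K) ∈ (1 : Submodule R K) := Submodule.one_le.1 le_rfl
  rw [h] at h1
  simp at h1

lemma aux_mul_ne_bot {A B : Submodule R K} (hA : A ≠ ⊥) (hB : B ≠ ⊥) : A * B ≠ ⊥ := by
  obtain ⟨a, haA, ha⟩ := (Submodule.ne_bot_iff A).1 hA
  obtain ⟨b, hbB, hb⟩ := (Submodule.ne_bot_iff B).1 hB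
  exact (Submodule.ne_bot_iff _).2 ⟨a*b, Submodule.mul_mem_mul haA hbB, mul_ne_zero ha hb⟩

lemma star_ne_bot (s : SemistarOp R K) {E : Submodule R K} (hE : E ≠ ⊥) : s.toFun E ≠ ⊥ :=
  fun h => hE (le_bot_iff.1 (h ▸ s.le_star' E hE))

lemma one_mem_star_one (s : SemistarOp R K) : (1:K) ∈ s.toFun 1 :=
  s.le_star' 1 aux_one_ne_bot (Submodule.one_le.1 le_rfl)

lemma starF_mono (φ : Submodule R K → Submodule R K) {E E' : Submodule R K} (h : E ≤ E') :
    starF φ E ≤ starF φ E' := by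
  refine sSup_le_sSup ?_
  rintro G ⟨F, h1, h2, h3, h4⟩
  exact ⟨F, h1, h2, h3.trans h, h4⟩

lemma le_starF (s : SemistarOp R K) (E : Submodule R K) : E ≤ starF s.toFun E := by
  intro x hx
  by_cases hx0 : x = 0
  · subst hx0; exact zero_mem _
  · have h2 : Submodule.span R {x} ≠ ⊥ := by
      simpa [Submodule.span_singleton_eq_bot] using hx0
    have hmem : s.toFun (Submodule.span R {x}) ∈
        {G | ∃ F : Submodule R K, F.FG ∧ F ≠ ⊥ ∧ F ≤ E ∧ G = s.toFun F} :=
      ⟨_, Submodule.fg_span_singleton x, h2,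
        (Submodule.span_le).2 (Set.singleton_subset_iff.2 hx), rfl⟩
    exact le_sSup hmem (s.le_star' _ h2 (Submodule.mem_span_singleton_self x))

lemma starF_le_star_one (s : SemistarOp R K) {E : Submodule R K} (hE : E ≤ 1) :
    starF s.toFun E ≤ s.toFun 1 := by
  refine sSup_le ?_
  rintro G ⟨F, hFG, hFb, hFE, rfl⟩
  exact s.mono' F 1 hFb aux_one_ne_bot (hFE.trans hE)

lemma mem_starF {s : SemistarOp R K} {E : Submodule R K} {x : K} (hx : x ∈ starF s.toFun E)
    (hx0 : x ≠ 0) : ∃ F : Submodule R K, F.FG ∧ F ≠ ⊥ ∧ F ≤ E ∧ x ∈ s.toFun F := by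
  by_cases hne : {G | ∃ F : Submodule R K, F.FG ∧ F ≠ ⊥ ∧ F ≤ E ∧ G = s.toFun F}.Nonempty
  · have hdir : DirectedOn (· ≤ ·)
        {G | ∃ F : Submodule R K, F.FG ∧ F ≠ ⊥ ∧ F ≤ E ∧ G = s.toFun F} := by
      rintro _ ⟨F₁, h₁, hb₁, hle₁, rfl⟩ _ ⟨F₂, h₂, hb₂, hle₂, rfl⟩
      have hsb : F₁ ⊔ F₂ ≠ ⊥ := fun h => hb₁ (le_bot_iff.1 (h ▸ le_sup_left))
      exact ⟨s.toFun (F₁ ⊔ F₂), ⟨F₁ ⊔ F₂, h₁.sup h₂, hsb, sup_le hle₁ hle₂, rfl⟩,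
        s.mono' _ _ hb₁ hsb le_sup_left, s.mono' _ _ hb₂ hsb le_sup_right⟩
    obtain ⟨G, hGS, hxG⟩ := (Submodule.mem_sSup_of_directed hne hdir).1 hx
    obtain ⟨F, h1, h2, h3, rfl⟩ := hGS
    exact ⟨F, h1, h2, h3, hxG⟩
  · rw [Set.not_nonempty_iff_eq_empty] at hne
    rw [starF, hne, sSup_empty] at hx
    exact absurd ((Submodule.mem_bot R).1 hx) hx0

lemma starF_closed (s : SemistarOp R K) {E : Submodule R K} (hE : E ≠ ⊥)
    {F : Submodule R K} (hFG : F.FG) (hF : F ≤ starF s.toFun E) :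
    ∃ G : Submodule R K, G.FG ∧ G ≠ ⊥ ∧ G ≤ E ∧ F ≤ s.toFun G := by
  obtain ⟨e, heE, he0⟩ := (Submodule.ne_bot_iff E).1 hE
  have hspan : Submodule.span R {e} ≠ ⊥ := by
    simpa [Submodule.span_singleton_eq_bot] using he0
  have key : ∀ t : Finset K, (↑t : Set K) ⊆ (starF s.toFun E : Set K) →
      ∃ G : Submodule R K, G.FG ∧ G ≠ ⊥ ∧ G ≤ E ∧ Submodule.span R ↑t ≤ s.toFun G := by
    classical
    intro t
    induction t using Finset.induction_on with
    | empty =>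
      intro _
      refine ⟨Submodule.span R {e}, Submodule.fg_span_singleton e, hspan,
        (Submodule.span_le).2 (Set.singleton_subset_iff.2 heE), ?_⟩
      simp
    | @insert y t hyt ih =>
      intro hsub
      rw [Finset.coe_insert] at hsub
      obtain ⟨G, hG1, hG2, hG3, hG4⟩ := ih ((Set.subset_insert y ↑t).trans hsub)
      by_cases hy : y = 0
      · refine ⟨G, hG1, hG2, hG3, ?_⟩
        rw [Finset.coe_insert, hy, Submodule.span_insert_zero]
        exact hG4
      · obtain ⟨Gy, hy1, hy2, hy3, hy4⟩ := mem_starF (hsub (Set.mem_insert y ↑t)) hy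
        have hsb : G ⊔ Gy ≠ ⊥ := fun h => hG2 (le_bot_iff.1 (h ▸ le_sup_left))
        refine ⟨G ⊔ Gy, hG1.sup hy1, hsb, sup_le hG3 hy3, ?_⟩
        rw [Finset.coe_insert, Submodule.span_insert]
        refine sup_le ?_ (hG4.trans (s.mono' _ _ hG2 hsb le_sup_left))
        rw [Submodule.span_singleton_le_iff_mem]
        exact s.mono' _ _ hy2 hsb le_sup_right hy4
  obtain ⟨t, ht⟩ := hFG
  obtain ⟨G, h1, h2, h3, h4⟩ := key t (by rw [← Submodule.span_le, ht]; exact hF)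
  exact ⟨G, h1, h2, h3, by rwa [ht] at h4⟩

lemma starF_idem (s : SemistarOp R K) {E : Submodule R K} (hE : E ≠ ⊥) :
    starF s.toFun (starF s.toFun E) = starF s.toFun E := by
  refine le_antisymm (sSup_le ?_) (le_starF s _)
  rintro _ ⟨F, hFG, hFb, hFE, rfl⟩
  obtain ⟨G, h1, h2, h3, h4⟩ := starF_closed s hE hFG hFE
  have hsG : s.toFun G ≠ ⊥ := star_ne_bot s h2
  have hle : s.toFun F ≤ s.toFun G := by
    have h := s.mono' _ _ hFb hsG h4
    rwa [s.idem' _ h2] at h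
  exact hle.trans (le_sSup ⟨G, h1, h2, h3, rfl⟩)

lemma star_eq_star_one (s : SemistarOp R K) {E : Submodule R K} (hE : E ≠ ⊥) (hle : E ≤ 1)
    (h1 : (1:K) ∈ s.toFun E) : s.toFun E = s.toFun 1 := by
  refine le_antisymm (s.mono' _ _ hE aux_one_ne_bot hle) ?_
  have h2 : (1 : Submodule R K) ≤ s.toFun E := Submodule.one_le.2 h1
  have h3 := s.mono' 1 (s.toFun E) aux_one_ne_bot (star_ne_bot s hE) h2
  rwa [s.idem' _ hE] at h3

lemma starF_eq_star_one (s : SemistarOp R K) {E : Submodule R K} (hle : E ≤ 1) :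
    starF s.toFun E = s.toFun 1 ↔ (1:K) ∈ starF s.toFun E := by
  constructor
  · intro h; rw [h]; exact one_mem_star_one s
  · intro h
    refine le_antisymm (starF_le_star_one s hle) ?_
    obtain ⟨F, h1, h2, h3, h4⟩ := mem_starF h one_ne_zero
    rw [← star_eq_star_one s h2 (h3.trans hle) h4]
    exact le_sSup ⟨F, h1, h2, h3, rfl⟩

lemma star_mul_le (s : SemistarOp R K) {E : Submodule R K} (hE : E ≠ ⊥) (F : Submodule R K) :
    s.toFun E * F ≤ s.toFun (E * F) := by
  refine Submodule.mul_le.2 fun m hm n hn => ?_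
  by_cases hn0 : n = 0
  · subst hn0; rw [mul_zero]; exact zero_mem _
  · have h1 : m * n ∈ n • s.toFun E := by
      have h := Submodule.smul_mem_pointwise_smul m n _ hm
      rwa [smul_eq_mul, mul_comm] at h
    rw [← s.smul' n hn0 E hE] at h1
    have h2 : n • E ≤ E * F := by
      intro x hx
      have hx' : x ∈ n • (E : Set K) := by
        rw [← Submodule.coe_pointwise_smul]; exact hx
      obtain ⟨e, he, rfl⟩ := hx'
      show n • e ∈ E * F
      rw [smul_eq_mul, mul_comm n e]
      exact Submodule.mul_mem_mul he hn
    have hnE : n • E ≠ ⊥ := by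
      obtain ⟨e, he, he0⟩ := (Submodule.ne_bot_iff E).1 hE
      refine (Submodule.ne_bot_iff _).2 ⟨n • e, Submodule.smul_mem_pointwise_smul e n E he, ?_⟩
      simp only [smul_eq_mul]
      exact mul_ne_zero hn0 he0
    have hEF : E * F ≠ ⊥ := fun h => hnE (le_bot_iff.1 (h ▸ h2))
    exact s.mono' _ _ hnE hEF h2 h1

lemma one_mem_star_mul (s : SemistarOp R K) {A B : Submodule R K} (hA : A ≠ ⊥) (hB : B ≠ ⊥)
    (h1 : (1:K) ∈ s.toFun A) (h2 : (1:K) ∈ s.toFun B) : (1:K) ∈ s.toFun (A * B) := by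
  have hsB : s.toFun B ≠ ⊥ := star_ne_bot s hB
  have step1 : s.toFun A * s.toFun B ≤ s.toFun (A * s.toFun B) := star_mul_le s hA _
  have step2 : A * s.toFun B ≤ s.toFun (B * A) := by
    rw [mul_comm A (s.toFun B)]
    exact star_mul_le s hB A
  have hABb : A * s.toFun B ≠ ⊥ := aux_mul_ne_bot hA hsB
  have hBA : B * A ≠ ⊥ := aux_mul_ne_bot hB hA
  have step3 : s.toFun (A * s.toFun B) ≤ s.toFun (B * A) := by
    have h := s.mono' _ _ hABb (star_ne_bot s hBA) step2
    rwa [s.idem' _ hBA] at h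
  have hfin : (1:K) ∈ s.toFun (B * A) :=
    step3 (step1 (by simpa using Submodule.mul_mem_mul h1 h2))
  rwa [mul_comm B A] at hfin

/-! ### `idealSub` lemmas -/

lemma idealSub_le_one (I : Ideal R) : (idealSub I : Submodule R K) ≤ 1 := by
  rw [Submodule.one_eq_range]
  exact LinearMap.map_le_range

lemma idealSub_ne_bot (hinj : Function.Injective (algebraMap R K)) {I : Ideal R} (hI : I ≠ ⊥) :
    (idealSub I : Submodule R K) ≠ ⊥ := by
  obtain ⟨i, hi, hi0⟩ := (Submodule.ne_bot_iff I).1 hI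
  refine (Submodule.ne_bot_iff _).2 ⟨algebraMap R K i, ⟨i, hi, rfl⟩, ?_⟩
  intro h
  exact hi0 (hinj (by rw [h, map_zero]))

lemma idealSub_mul_le (I J : Ideal R) :
    (idealSub I : Submodule R K) * idealSub J ≤ idealSub (I * J) := by
  refine Submodule.mul_le.2 ?_
  rintro _ ⟨i, hi, rfl⟩ _ ⟨j, hj, rfl⟩
  exact ⟨i * j, Ideal.mul_mem_mul hi hj, by simp⟩

lemma mem_idealSub_of_mem {I : Ideal R} {i : R} (hi : i ∈ I) :
    algebraMap R K i ∈ (idealSub I : Submodule R K) := ⟨i, hi, rfl⟩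

/-- Quasi-⋆_f-maximal ideals are quasi-⋆_f-primes. -/
lemma quasiMax_isPrime (hinj : Function.Injective (algebraMap R K))
    (s : SemistarOp R K) {N : Ideal R} (hN : QuasiMax (starF s.toFun) N) :
    QuasiPrime (starF s.toFun) N := by
  obtain ⟨hNq, hNt, hmax⟩ := hN
  refine ⟨hNq, Ideal.isPrime_iff.2 ⟨hNt, ?_⟩⟩
  intro a b hab
  by_contra hcon
  push_neg at hcon
  obtain ⟨ha, hb⟩ := hcon
  have key : ∀ c : R, c ∉ N →
      (1:K) ∈ starF s.toFun (idealSub (N ⊔ Ideal.span {c})) := by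
    intro c hc
    set M : Ideal R := N ⊔ Ideal.span {c} with hM
    have hcM : c ∈ M := Submodule.mem_sup_right (Ideal.mem_span_singleton_self c)
    have hc0 : c ≠ 0 := fun h => hc (h ▸ N.zero_mem)
    have hMb : M ≠ ⊥ := fun h => hc0 ((Submodule.mem_bot R).1 (h ▸ hcM))
    have hMsb : (idealSub M : Submodule R K) ≠ ⊥ := idealSub_ne_bot hinj hMb
    set J : Ideal R := Submodule.comap (Algebra.linearMap R K) (starF s.toFun (idealSub M))
      with hJ
    have hMJ : M ≤ J := by
      intro x hx
      exact le_starF s (idealSub M) (mem_idealSub_of_mem hx)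
    have hJq2 : Submodule.comap (Algebra.linearMap R K) (starF s.toFun (idealSub J)) = J := by
      refine le_antisymm ?_ ?_
      · have h1 : (idealSub J : Submodule R K) ≤ starF s.toFun (idealSub M) :=
          Submodule.map_comap_le _ _
        have h2 := starF_mono s.toFun h1
        rw [starF_idem s hMsb] at h2
        exact Submodule.comap_mono h2
      · intro x hx
        exact le_starF s (idealSub J) (mem_idealSub_of_mem hx)
    have hJb : J ≠ ⊥ := by
      refine fun h => hc0 ((Submodule.mem_bot R).1 (h ▸ hMJ hcM))
    by_cases hJt : J = ⊤
    · have h1 : (1:R) ∈ J := hJt ▸ Submodule.mem_top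
      rw [hJ] at h1
      simp only [Submodule.mem_comap, Algebra.linearMap_apply, map_one] at h1
      exact h1
    · have heq := hmax J ⟨hJb, hJq2⟩ hJt (le_sup_left.trans hMJ)
      exact absurd (show c ∈ N from heq.symm ▸ hMJ hcM) hc
  obtain ⟨Fa, hFa1, hFa2, hFa3, hFa4⟩ := mem_starF (key a ha) one_ne_zero
  obtain ⟨Fb, hFb1, hFb2, hFb3, hFb4⟩ := mem_starF (key b hb) one_ne_zero
  have hprod : (1:K) ∈ s.toFun (Fa * Fb) := one_mem_star_mul s hFa2 hFb2 hFa4 hFb4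
  have hNN : (N ⊔ Ideal.span {a}) * (N ⊔ Ideal.span {b}) ≤ N := by
    refine Submodule.mul_le.2 fun x hx y hy => ?_
    rw [Submodule.mem_sup] at hx hy
    obtain ⟨n₁, hn₁, z₁, hz₁, rfl⟩ := hx
    obtain ⟨n₂, hn₂, z₂, hz₂, rfl⟩ := hy
    rw [Ideal.mem_span_singleton] at hz₁ hz₂
    obtain ⟨r, rfl⟩ := hz₁
    obtain ⟨u, rfl⟩ := hz₂
    have hre : (n₁ + a * r) * (n₂ + b * u) =
        n₁ * (n₂ + b * u) + (a * r) * n₂ + (r * u) * (a * b) := by ring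
    rw [hre]
    exact add_mem (add_mem (N.mul_mem_right _ hn₁) (N.mul_mem_left _ hn₂))
      (N.mul_mem_left _ hab)
  have hle : Fa * Fb ≤ (idealSub N : Submodule R K) := by
    refine (mul_le_mul' hFa3 hFb3).trans ?_
    refine (idealSub_mul_le _ _).trans ?_
    exact Submodule.map_mono hNN
  have h1N : (1:K) ∈ starF s.toFun (idealSub N) := by
    have hmem : s.toFun (Fa * Fb) ≤ starF s.toFun (idealSub N) :=
      le_sSup ⟨Fa * Fb, hFa1.mul hFb1, aux_mul_ne_bot hFa2 hFb2, hle, rfl⟩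
    exact hmem hprod
  have : (1:R) ∈ N := by
    rw [← hNq.2]
    simpa using h1N
  exact hNt ((Ideal.eq_top_iff_one N).2 this)

/-- Every proper quasi-⋆_f-ideal is contained in a quasi-⋆_f-maximal ideal. -/
lemma exists_quasiMax (hinj : Function.Injective (algebraMap R K)) (s : SemistarOp R K)
    {J : Ideal R} (hJq : QuasiIdeal (starF s.toFun) J) (hJt : J ≠ ⊤) :
    ∃ N : Ideal R, QuasiMax (starF s.toFun) N ∧ J ≤ N := by
  set S : Set (Ideal R) := {I | QuasiIdeal (starF s.toFun) I ∧ I ≠ ⊤} with hS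
  have hchain : ∀ c ⊆ S, IsChain (· ≤ ·) c → ∀ y ∈ c, ∃ ub ∈ S, ∀ z ∈ c, z ≤ ub := by
    intro c hcS hc y hy
    refine ⟨sSup c, ⟨⟨?_, ?_⟩, ?_⟩, fun z hz => le_sSup hz⟩
    · -- sSup c ≠ ⊥
      have hyb : y ≠ ⊥ := (hcS hy).1.1
      exact fun h => hyb (le_bot_iff.1 (h ▸ le_sSup hy))
    · -- comap = sSup c
      refine le_antisymm ?_ ?_
      · intro x hx
        have hx' : algebraMap R K x ∈ starF s.toFun (idealSub (sSup c)) := hx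
        by_cases hx0 : algebraMap R K x = 0
        · have : x = 0 := hinj (by rw [hx0, map_zero])
          exact this ▸ (sSup c).zero_mem
        · obtain ⟨F, hF1, hF2, hF3, hF4⟩ := mem_starF hx' hx0
          obtain ⟨t, ht⟩ := hF1
          have hmem : ∀ t' : Finset K, (↑t' : Set K) ⊆ ((idealSub (sSup c) : Submodule R K) : Set K) →
              ∃ z ∈ c, (↑t' : Set K) ⊆ ((idealSub z : Submodule R K) : Set K) := by
            classical
            intro t'
            induction t' using Finset.induction_on with
            | empty => intro _; exact ⟨y, hy, by simp⟩
            | @insert w t' hwt ih =>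
              intro hsub
              rw [Finset.coe_insert] at hsub
              obtain ⟨z, hzc, hz⟩ := ih ((Set.subset_insert w ↑t').trans hsub)
              have hw : w ∈ (idealSub (sSup c) : Submodule R K) :=
                hsub (Set.mem_insert w ↑t')
              obtain ⟨v, hv, rfl⟩ := hw
              have hdir : DirectedOn (· ≤ ·) c := hc.directedOn
              obtain ⟨z', hz'c, hvz'⟩ :=
                (Submodule.mem_sSup_of_directed ⟨y, hy⟩ hdir).1 hv
              rcases eq_or_ne z z' with rfl | hne
              · exact ⟨z, hzc, by
                  rw [Finset.coe_insert]
                  exact Set.insert_subset (mem_idealSub_of_mem hvz') hz⟩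
              · rcases hc hzc hz'c hne with hle | hle
                · refine ⟨z', hz'c, ?_⟩
                  rw [Finset.coe_insert]
                  refine Set.insert_subset (mem_idealSub_of_mem hvz') ?_
                  exact hz.trans (fun u hu => Submodule.map_mono hle hu)
                · refine ⟨z, hzc, ?_⟩
                  rw [Finset.coe_insert]
                  exact Set.insert_subset
                    (Submodule.map_mono hle (mem_idealSub_of_mem hvz')) hz
          obtain ⟨z, hzc, hz⟩ := hmem t (by
            rw [← Submodule.span_le, ht]
            exact hF3)
          have hFz : F ≤ (idealSub z : Submodule R K) := by
            rw [← ht, Submodule.span_le]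
            exact hz
          have hxz : algebraMap R K x ∈ starF s.toFun (idealSub z) := by
            have hmem : s.toFun F ≤ starF s.toFun (idealSub z) :=
              le_sSup ⟨F, ⟨t, ht⟩, hF2, hFz, rfl⟩
            exact hmem hF4
          have hxz' : x ∈ z := by
            rw [← (hcS hzc).1.2]
            exact hxz
          exact le_sSup hzc hxz'
      · intro x hx
        exact le_starF s (idealSub (sSup c)) (mem_idealSub_of_mem hx)
    · -- sSup c ≠ ⊤
      intro h
      have h1 : (1:R) ∈ sSup c := h ▸ Submodule.mem_top
      obtain ⟨z, hzc, hz⟩ :=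
        (Submodule.mem_sSup_of_directed ⟨y, hy⟩ hc.directedOn).1 h1
      exact (hcS hzc).2 ((Ideal.eq_top_iff_one z).2 hz)
  obtain ⟨N, hJN, hNmax⟩ := zorn_le_nonempty₀ S hchain J ⟨hJq, hJt⟩
  refine ⟨N, ⟨hNmax.prop.1, hNmax.prop.2, ?_⟩, hJN⟩
  intro J' hJ'q hJ't hNJ'
  exact le_antisymm hNJ' (hNmax.2 ⟨hJ'q, hJ't⟩ hNJ')

end AuxGeneric

section AuxOverring

variable {D K : Type*} [CommRing D] [Field K] [Algebra D K] (T : Subalgebra D K)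

lemma extT_span (S : Set K) : extT T (Submodule.span D S) = Submodule.span ↥T S := by
  unfold extT
  exact Submodule.span_span_of_tower D ↥T S

lemma extT_fg {E : Submodule D K} (hE : E.FG) : (extT T E).FG := by
  obtain ⟨t, ht⟩ := hE
  exact ⟨t, by rw [← ht, extT_span]⟩

lemma extT_ne_bot {E : Submodule D K} (hE : E ≠ ⊥) : extT T E ≠ ⊥ := by
  obtain ⟨x, hx, h0⟩ := (Submodule.ne_bot_iff E).1 hE
  exact (Submodule.ne_bot_iff _).2 ⟨x, Submodule.subset_span hx, h0⟩

lemma extT_mono {E E' : Submodule D K} (h : E ≤ E') : extT T E ≤ extT T E' :=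
  Submodule.span_mono h

lemma extT_idealSub_le_one (I : Ideal D) : extT T (idealSub I) ≤ (1 : Submodule ↥T K) := by
  refine Submodule.span_le.2 ?_
  rintro x hx
  obtain ⟨i, hi, rfl⟩ := hx
  rw [SetLike.mem_coe, Submodule.one_eq_range, LinearMap.mem_range]
  exact ⟨algebraMap D ↥T i, by
    rw [Algebra.linearMap_apply, ← IsScalarTower.algebraMap_apply, Algebra.linearMap_apply]⟩

lemma extT_le_idealSub {I : Ideal D} {J : Ideal ↥T}
    (h : ∀ i ∈ I, algebraMap D ↥T i ∈ J) :
    extT T (idealSub I) ≤ (idealSub J : Submodule ↥T K) := by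
  refine Submodule.span_le.2 ?_
  rintro x hx
  obtain ⟨i, hi, rfl⟩ := hx
  rw [SetLike.mem_coe]
  exact ⟨algebraMap D ↥T i, h i hi, by
    rw [Algebra.linearMap_apply, ← IsScalarTower.algebraMap_apply, Algebra.linearMap_apply]⟩

end AuxOverring

/-- **Proposition 3.2.** Characterizations of semistar linkedness. -/
theorem linked_tfae
    {D K : Type*} [CommRing D] [IsDomain D] [Field K] [Algebra D K] [IsFractionRing D K]
    (T : Subalgebra D K) (s : SemistarOp D K) (s' : SemistarOp ↥T K) :
    List.TFAE [
      -- (i) T is (⋆,⋆')-linked to D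
      LinkedF s.toFun T s'.toFun,
      -- (ii) for each nonzero ideal I of D, I^{⋆_f} = D^⋆ ⟹ (IT)^{⋆'_f} = T^{⋆'}
      ∀ I : Ideal D, I ≠ ⊥ → starF s.toFun (idealSub I) = s.toFun 1 →
        starF s'.toFun (extT T (idealSub I)) = s'.toFun 1,
      -- (iii) for each proper quasi-⋆'_f-ideal J of T, (J ∩ D)^{⋆_f} ≠ D^⋆
      ∀ J : Ideal ↥T, QuasiIdeal (starF s'.toFun) J → J ≠ ⊤ →
        starF s.toFun (idealSub (J.comap (algebraMap D ↥T))) ≠ s.toFun 1,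
      -- (iv) for each quasi-⋆'_f-prime Q of T, (Q ∩ D)^{⋆_f} ≠ D^⋆
      ∀ Q : Ideal ↥T, QuasiPrime (starF s'.toFun) Q →
        starF s.toFun (idealSub (Q.comap (algebraMap D ↥T))) ≠ s.toFun 1,
      -- (v) for each quasi-⋆'_f-maximal N of T, (N ∩ D)^{⋆_f} ≠ D^⋆
      ∀ N : Ideal ↥T, QuasiMax (starF s'.toFun) N →
        starF s.toFun (idealSub (N.comap (algebraMap D ↥T))) ≠ s.toFun 1] := by
  have hinjD : Function.Injective (algebraMap D K) := IsFractionRing.injective D K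
  have hinjT : Function.Injective (algebraMap ↥T K) := Subtype.coe_injective
  tfae_have 1 → 2 := by
    intro hlink I hI hIs
    have hinj' : Function.Injective ⇑(Algebra.linearMap D K) := by
      rw [Algebra.coe_linearMap]; exact hinjD
    have h1K : (1:K) ∈ starF s.toFun (idealSub I) := hIs ▸ one_mem_star_one s
    obtain ⟨F, hFG, hFb, hFE, hF1⟩ := mem_starF h1K one_ne_zero
    have hFrange : F ≤ LinearMap.range (Algebra.linearMap D K) := by
      refine hFE.trans ?_
      rw [← Submodule.one_eq_range]
      exact idealSub_le_one I
    set F₀ : Ideal D := Submodule.comap (Algebra.linearMap D K) F with hF₀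
    have hmapF₀ : (idealSub F₀ : Submodule D K) = F := Submodule.map_comap_eq_self hFrange
    have hF₀I : F₀ ≤ I := by
      have h : Submodule.comap (Algebra.linearMap D K) F ≤
          Submodule.comap (Algebra.linearMap D K) (Submodule.map (Algebra.linearMap D K) I) :=
        Submodule.comap_mono hFE
      rwa [Submodule.comap_map_eq_of_injective hinj'] at h
    have hF₀sfg : (idealSub F₀ : Submodule D K).FG := by rw [hmapF₀]; exact hFG
    have hF₀b : F₀ ≠ ⊥ := fun h => hFb (by rw [← hmapF₀, h]; exact Submodule.map_bot _)
    have hF₀fg : F₀.FG := Submodule.fg_of_fg_map_injective _ hinj' hF₀sfg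
    have hsF₀ : s.toFun (idealSub F₀) = s.toFun 1 := by
      rw [hmapF₀]
      exact star_eq_star_one s hFb (hFE.trans (idealSub_le_one I)) hF1
    have hlinked := hlink F₀ hF₀b hF₀fg hsF₀
    rw [starF_eq_star_one s' (extT_idealSub_le_one T I)]
    have h1G : (1:K) ∈ s'.toFun (extT T (idealSub F₀)) := hlinked ▸ one_mem_star_one s'
    have hmem : s'.toFun (extT T (idealSub F₀)) ≤ starF s'.toFun (extT T (idealSub I)) :=
      le_sSup ⟨extT T (idealSub F₀), extT_fg T hF₀sfg,
        extT_ne_bot T (by rw [hmapF₀]; exact hFb),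
        extT_mono T (by rw [hmapF₀]; exact hFE), rfl⟩
    exact hmem h1G
  tfae_have 2 → 1 := by
    intro h2 F hFb hFfg hsF
    have hFsb : (idealSub F : Submodule D K) ≠ ⊥ := idealSub_ne_bot hinjD hFb
    have hstarF : starF s.toFun (idealSub F) = s.toFun 1 := by
      refine le_antisymm (starF_le_star_one s (idealSub_le_one F)) ?_
      rw [← hsF]
      exact le_sSup ⟨idealSub F, Submodule.FG.map _ hFfg, hFsb, le_rfl, rfl⟩
    have hA := h2 F hFb hstarF
    have hAb : extT T (idealSub F) ≠ ⊥ := extT_ne_bot T hFsb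
    have h1 : (1:K) ∈ starF s'.toFun (extT T (idealSub F)) := hA ▸ one_mem_star_one s'
    obtain ⟨G, hG1, hG2, hG3, hG4⟩ := mem_starF h1 one_ne_zero
    exact star_eq_star_one s' hAb (extT_idealSub_le_one T F)
      (s'.mono' G _ hG2 hAb hG3 hG4)
  tfae_have 2 → 3 := by
    intro h2 J hJq hJt heq
    set I : Ideal D := J.comap (algebraMap D ↥T) with hI
    have h1K : (1:K) ∈ starF s.toFun (idealSub I) := heq ▸ one_mem_star_one s
    obtain ⟨F, hF1, hF2, hF3, hF4⟩ := mem_starF h1K one_ne_zero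
    have hIb : I ≠ ⊥ := by
      intro h0
      apply hF2
      rw [h0] at hF3
      have hb : (idealSub (⊥ : Ideal D) : Submodule D K) = ⊥ := Submodule.map_bot _
      exact le_bot_iff.1 (hb ▸ hF3)
    have h' := h2 I hIb heq
    have hle : extT T (idealSub I) ≤ (idealSub J : Submodule ↥T K) :=
      extT_le_idealSub T (fun i hi => hi)
    have h1' : (1:K) ∈ starF s'.toFun (idealSub J) :=
      starF_mono s'.toFun hle (h' ▸ one_mem_star_one s')
    have h1J : (1:↥T) ∈ J := by
      rw [← hJq.2]
      simp only [Submodule.mem_comap, Algebra.linearMap_apply, map_one]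
      exact h1'
    exact hJt ((Ideal.eq_top_iff_one J).2 h1J)
  tfae_have 3 → 4 := by
    intro h3 Q hQ
    exact h3 Q hQ.1 hQ.2.ne_top
  tfae_have 4 → 5 := by
    intro h4 N hN
    exact h4 N (quasiMax_isPrime hinjT s' hN)
  tfae_have 5 → 2 := by
    intro h5 I hIb hIeq
    by_contra hne
    have hIsb : (idealSub I : Submodule D K) ≠ ⊥ := idealSub_ne_bot hinjD hIb
    have hAb : extT T (idealSub I) ≠ ⊥ := extT_ne_bot T hIsb
    have h1A : (1:K) ∉ starF s'.toFun (extT T (idealSub I)) := fun h1 =>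
      hne ((starF_eq_star_one s' (extT_idealSub_le_one T I)).2 h1)
    set J : Ideal ↥T :=
      Submodule.comap (Algebra.linearMap ↥T K) (starF s'.toFun (extT T (idealSub I))) with hJ
    have hJt : J ≠ ⊤ := by
      intro h
      apply h1A
      have h1 : (1:↥T) ∈ J := h ▸ Submodule.mem_top
      rw [hJ] at h1
      simpa using h1
    have hIJ : ∀ i ∈ I, algebraMap D ↥T i ∈ J := by
      intro i hi
      show Algebra.linearMap ↥T K (algebraMap D ↥T i) ∈
        starF s'.toFun (extT T (idealSub I))
      rw [Algebra.linearMap_apply, ← IsScalarTower.algebraMap_apply]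
      exact le_starF s' _ (Submodule.subset_span (mem_idealSub_of_mem hi))
    have hJb : J ≠ ⊥ := by
      obtain ⟨i, hi, hi0⟩ := (Submodule.ne_bot_iff I).1 hIb
      refine (Submodule.ne_bot_iff J).2 ⟨algebraMap D ↥T i, hIJ i hi, fun h0 => hi0 ?_⟩
      apply hinjD
      rw [IsScalarTower.algebraMap_apply D ↥T K, h0, map_zero, map_zero]
    have hJq : QuasiIdeal (starF s'.toFun) J := by
      refine ⟨hJb, le_antisymm ?_ ?_⟩
      · have h1 : (idealSub J : Submodule ↥T K) ≤ starF s'.toFun (extT T (idealSub I)) :=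
          Submodule.map_comap_le _ _
        have hmono := starF_mono s'.toFun h1
        rw [starF_idem s' hAb] at hmono
        exact Submodule.comap_mono hmono
      · intro x hx
        exact le_starF s' (idealSub J) (mem_idealSub_of_mem hx)
    obtain ⟨N, hNmax, hJN⟩ := exists_quasiMax hinjT s' hJq hJt
    refine h5 N hNmax ?_
    refine le_antisymm (starF_le_star_one s (idealSub_le_one _)) ?_
    rw [← hIeq]
    refine starF_mono s.toFun (Submodule.map_mono ?_)
    intro i hi
    exact hJN (hIJ i hi)
  tfae_finish
end

section
/- Let D be an integral domain with quotient field K, let ⋆ be a semistar operation on D, and let {T_λ : λ ∈ Λ} be a family of overrings of D directed by inclusion, with direct union T := ∪{T_λ : λ ∈ Λ}. If T_λ is (⋆, t_{T_λ})-linked to D for each λ ∈ Λ, then T is (⋆, t_T)-linked to D. -/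
open Pointwise

section MyHelpers
variable {R : Type*} {K : Type*} [CommRing R] [Field K] [Algebra R K]

lemma myMulMemOne {x y : K} (hx : x ∈ (1 : Submodule R K)) (hy : y ∈ (1 : Submodule R K)) :
    x * y ∈ (1 : Submodule R K) := by
  have := Submodule.mul_mem_mul hx hy
  rwa [mul_one] at this

lemma tOp_mono {E F : Submodule R K} (h : E ≤ F) : tOp E ≤ tOp F := by
  apply sSup_le_sSup
  rintro G ⟨F', h1, h2, h3, h4⟩
  exact ⟨F', h1, h2, le_trans h3 h, h4⟩

lemma one_le_tOp_one : (1 : Submodule R K) ≤ tOp 1 := by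
  have h1 : (1 : Submodule R K) ≤ vOp 1 := by
    intro x hx
    rw [vOp, Submodule.mem_div_iff_forall_mul_mem]
    intro y hy
    rw [Submodule.mem_div_iff_forall_mul_mem] at hy
    have := hy x hx
    rwa [mul_comm]
  refine le_trans h1 (le_sSup ?_)
  exact ⟨1, ⟨{1}, by simp [Submodule.one_eq_span]⟩, one_ne_zero (α := Submodule R K), le_rfl, rfl⟩

lemma tOp_one_le_one : tOp (1 : Submodule R K) ≤ 1 := by
  apply sSup_le
  rintro G ⟨F', _, _, hle, rfl⟩
  intro x hx
  rw [vOp, Submodule.mem_div_iff_forall_mul_mem] at hx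
  have h1 : (1 : K) ∈ (1 : Submodule R K) / F' := by
    rw [Submodule.mem_div_iff_forall_mul_mem]
    intro y hy; rw [one_mul]; exact hle hy
  have := hx 1 h1
  rwa [mul_one] at this

lemma smul_tOp_le (E : Submodule R K) (y : K) (hy : ∀ z ∈ E, y * z ∈ (1 : Submodule R K)) :
    ∀ w ∈ tOp E, y * w ∈ (1 : Submodule R K) := by
  have hyd : ∀ G : Submodule R K, G ≤ E → y ∈ (1 : Submodule R K) / G := by
    intro G hG
    rw [Submodule.mem_div_iff_forall_mul_mem]
    exact fun z hz => hy z (hG hz)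
  intro w hw
  have hle2 : tOp E ≤ Submodule.comap (LinearMap.mulLeft R y) 1 := by
    apply sSup_le
    rintro G ⟨F', _, _, hle, rfl⟩
    intro x hx
    rw [vOp, Submodule.mem_div_iff_forall_mul_mem] at hx
    simp only [Submodule.mem_comap, LinearMap.mulLeft_apply]
    have := hx y (hyd F' hle)
    rwa [mul_comm]
  exact hle2 hw

lemma my_mem_one (V : Subalgebra R K) (x : K) : x ∈ (1 : Submodule ↥V K) ↔ x ∈ V := by
  rw [Submodule.mem_one]
  constructor
  · rintro ⟨y, rfl⟩; exact y.2
  · intro hx; exact ⟨⟨x, hx⟩, rfl⟩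

end MyHelpers

/-- **Lemma 3.5 (3).** A direct union of overrings each `(⋆, t)`-linked to `D` is
`(⋆, t)`-linked to `D`. -/
theorem directUnion_tLinked
    {D K : Type*} [CommRing D] [IsDomain D] [Field K] [Algebra D K] [IsFractionRing D K]
    (s : SemistarOp D K) {ι : Type*} [Nonempty ι]
    (T : ι → Subalgebra D K) (hdir : Directed (· ≤ ·) T)
    (U : Subalgebra D K) (hU : (U : Set K) = ⋃ i, (T i : Set K))
    (hlinked : ∀ i, TLinked s.toFun (T i)) :
    TLinked s.toFun U := by
  intro F hF hFG hstar
  classical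
  obtain ⟨sgen, hsgen⟩ := hFG
  set E : Submodule ↥U K := extT U (idealSub F) with hE
  set G : Submodule ↥U K := Submodule.span ↥U ((algebraMap D K) '' ↑sgen) with hG
  have hGle : G ≤ E := by
    apply Submodule.span_le.2
    rintro z ⟨f, hf, rfl⟩
    apply Submodule.subset_span
    exact ⟨f, by rw [← hsgen]; exact Ideal.subset_span hf, rfl⟩
  have hGfg : G.FG := Submodule.fg_span (sgen.finite_toSet.image _)
  have hGne : G ≠ ⊥ := by
    obtain ⟨f, hfs, hf0⟩ : ∃ f ∈ sgen, f ≠ 0 := by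
      by_contra h
      push_neg at h
      apply hF
      rw [← hsgen, Ideal.span_eq_bot]
      exact fun x hx => h x hx
    intro hbot
    have hmem : algebraMap D K f ∈ G := Submodule.subset_span ⟨f, hfs, rfl⟩
    rw [hbot, Submodule.mem_bot] at hmem
    exact hf0 ((map_eq_zero_iff _ (IsFractionRing.injective D K)).mp hmem)
  have hkey : (1 : Submodule ↥U K) / G ≤ 1 := by
    intro y hy
    rw [Submodule.mem_div_iff_forall_mul_mem] at hy
    have h1 : ∀ f : {x // x ∈ sgen}, ∃ i, y * algebraMap D K f.1 ∈ T i := by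
      intro f
      have h2 : y * algebraMap D K f.1 ∈ (1 : Submodule ↥U K) :=
        hy _ (Submodule.subset_span ⟨f.1, f.2, rfl⟩)
      rw [my_mem_one, ← SetLike.mem_coe, hU] at h2
      exact Set.mem_iUnion.1 h2
    choose g hg using h1
    obtain ⟨i, hi⟩ := hdir.finset_le (Finset.image g Finset.univ)
    have hgen : ∀ f ∈ sgen, y * algebraMap D K f ∈ T i := fun f hf =>
      hi _ (Finset.mem_image.2 ⟨⟨f, hf⟩, Finset.mem_univ _, rfl⟩) (hg ⟨f, hf⟩)
    have hJ : ∀ f ∈ F, y * algebraMap D K f ∈ T i := by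
      have h3 : F ≤ Submodule.comap ((LinearMap.mulLeft D y).comp (Algebra.linearMap D K))
          (Subalgebra.toSubmodule (T i)) := by
        rw [← hsgen, Ideal.span_le]
        intro f hf
        simpa using hgen f hf
      intro f hf
      simpa using h3 hf
    have hEi : ∀ z ∈ extT (T i) (idealSub F), y * z ∈ (1 : Submodule ↥(T i) K) := by
      intro z hz
      have h4 : extT (T i) (idealSub F) ≤
          Submodule.comap (LinearMap.mulLeft ↥(T i) y) (1 : Submodule ↥(T i) K) := by
        apply Submodule.span_le.2
        rintro w hw
        obtain ⟨f, hf, rfl⟩ := hw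
        simp only [Submodule.mem_comap, SetLike.mem_coe, LinearMap.mulLeft_apply]
        rw [my_mem_one]
        exact hJ f hf
      simpa using h4 hz
    have htO := hlinked i F hF ⟨sgen, hsgen⟩ hstar
    have h5 : y * 1 ∈ (1 : Submodule ↥(T i) K) := by
      apply smul_tOp_le _ y hEi
      rw [htO]
      exact one_le_tOp_one (Submodule.one_le.1 le_rfl)
    rw [mul_one, my_mem_one] at h5
    rw [my_mem_one, ← SetLike.mem_coe, hU]
    exact Set.mem_iUnion.2 ⟨i, h5⟩
  have hEle1 : E ≤ 1 := by
    apply Submodule.span_le.2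
    rintro z ⟨f, hf, rfl⟩
    rw [SetLike.mem_coe, my_mem_one]
    exact U.algebraMap_mem f
  have h1leV : (1 : Submodule ↥U K) ≤ vOp G := by
    intro x hx
    rw [vOp, Submodule.mem_div_iff_forall_mul_mem]
    intro z hz
    exact myMulMemOne hx (hkey hz)
  have hVle : vOp G ≤ tOp E := le_sSup ⟨G, hGfg, hGne, hGle, rfl⟩
  exact le_antisymm (tOp_mono hEle1) (le_trans tOp_one_le_one (h1leV.trans hVle))
end

section
/- Let ⋆ be a semistar operation on an integral domain D with quotient field K. Then the overring D^{[⋆]} := ∪{(H^⋆ :_K H^⋆) : H a nonzero finitely generated D-submodule of K} is t-linked to (D,⋆). If moreover (D :_K D^⋆) ≠ (0), then the complete integral closure of D (the set of x ∈ K for which there exists a nonzero d ∈ D with d·x^n ∈ D for all n ≥ 0) is t-linked to (D,⋆); in particular, the complete integral closure of D is always t-linked to D with respect to the t-operation (i.e. (t_D, t)-linked). -/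
open Pointwise

/-- The semistar integral closure `D^{[⋆]} = ∪ {(H^⋆ :_K H^⋆) : H nonzero f.g.}`,
as an overring of `D` (the union is already a ring). -/
def semistarIntClosure {D K : Type*} [CommRing D] [Field K] [Algebra D K]
    (s : SemistarOp D K) : Subalgebra D K :=
  Algebra.adjoin D {x : K | ∃ H : Submodule D K, H.FG ∧ H ≠ ⊥ ∧
    x ∈ (s.toFun H / s.toFun H : Submodule D K)}

/-- The complete integral closure of `D` in `K`: the elements `x ∈ K` such that
`d·xⁿ ∈ D` for all `n ≥ 0`, for some nonzero `d ∈ D` (the set is already a ring). -/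
def completeIntClosure (D K : Type*) [CommRing D] [Field K] [Algebra D K] :
    Subalgebra D K :=
  Algebra.adjoin D
    {x : K | ∃ d : D, d ≠ 0 ∧ ∀ n : ℕ, algebraMap D K d * x ^ n ∈ (⊥ : Subalgebra D K)}

/-!
Each overring `T` is handled through one criterion: `T` is `t`-linked to `(D, ⋆)` as soon as
`(T :_K FT) = T` for every nonzero finitely generated ideal `F` with `F^⋆ = D^⋆`, because then
`(FT)^{v_T} = T` and, `FT` being finitely generated, `(FT)^{t_T} = T = T^{t_T}`.
So let `x F ⊆ T`, with `F` generated by `f₁, …, fₖ`.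

For `T = D^{[⋆]}` the stabilizers `(H^⋆ : H^⋆)` form a directed family (that of `H₁H₂` contains
those of `H₁` and `H₂`), so all `x fᵢ` stabilize a single `H^⋆`. Then `x (F H^⋆)^⋆ ⊆ H^⋆`, and
`(F H^⋆)^⋆ = (F^⋆ H)^⋆ = (D^⋆ H)^⋆ = H^⋆`.

For the complete integral closure `D*`, the algebra `D[x f₁, …, x fₖ] ⊆ D*` has a common
denominator `d`, so `d xⁿ ∈ (D : Fⁿ)` for all `n`. If `F^⋆ = D^⋆` then `(Fⁿ)^⋆ = D^⋆`, which
puts `(D : Fⁿ)` inside `D^⋆`, and a nonzero `c ∈ (D : D^⋆)` gives `c d xⁿ ∈ D`. For the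
`t`-operation, `F^t = D` means `(D : F) = D`, hence `(D : Fⁿ) = D`.
-/

open scoped nonZeroDivisors

namespace Submodule

variable {R A : Type*} [CommSemiring R] [CommSemiring A] [Algebra R A]

lemma mem_div_span_iff {I : Submodule R A} {G : Set A} {x : A} :
    x ∈ I / span R G ↔ ∀ g ∈ G, x * g ∈ I := by
  refine ⟨fun h g hg => h g (subset_span hg), fun h y hy => ?_⟩
  induction hy using span_induction with
  | mem g hg => exact h g hg
  | zero => simp
  | add a b _ _ ha hb => rw [mul_add]; exact add_mem ha hb
  | smul r a _ ha => rw [mul_smul_comm]; exact smul_mem _ r ha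

lemma div_div_eq_div_mul (I J L : Submodule R A) : I / J / L = I / (L * J) :=
  eq_of_forall_le_iff fun X => by simp only [le_div_iff_mul_le, mul_assoc]

lemma div_le_div_of_le_right {I J₁ J₂ : Submodule R A} (h : J₁ ≤ J₂) : I / J₂ ≤ I / J₁ :=
  fun _ hx y hy => hx y (h hy)

lemma one_div_one : (1 : Submodule R A) / 1 = 1 :=
  le_antisymm (fun x hx => by simpa using hx 1 (one_le.mp le_rfl)) (one_le_one_div.mpr le_rfl)

lemma one_div_pow_le_one {I : Submodule R A} (h : 1 / I ≤ 1) (n : ℕ) : 1 / I ^ n ≤ 1 := by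
  induction n with
  | zero => rw [pow_zero, one_div_one]
  | succ n ih =>
    refine le_trans ?_ ih
    rw [le_div_iff_mul_le]
    refine le_trans ?_ h
    rw [le_div_iff_mul_le, mul_assoc, ← pow_succ, mul_comm]
    exact mul_one_div_le_one

lemma pow_mem_div_pow {B : Subalgebra R A} {I : Submodule R A} {x : A}
    (hx : x ∈ B.toSubmodule / I) (n : ℕ) : x ^ n ∈ B.toSubmodule / I ^ n := by
  induction n with
  | zero =>
    intro y hy
    obtain ⟨r, rfl⟩ := mem_one.mp (by simpa using hy)
    simp
  | succ n ih =>
    intro y hy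
    rw [pow_succ] at hy
    refine Submodule.mul_induction_on hy (fun m hm i hi => ?_)
      fun a b ha hb => by rw [mul_add]; exact add_mem ha hb
    rw [pow_succ, mul_mul_mul_comm]
    exact B.mul_mem (ih m hm) (hx i hi)

lemma div_self_le_mul_div_mul_self {I J : Submodule R A} : I / I ≤ (I * J) / (I * J) :=
  fun x hx y hy => Submodule.mul_induction_on hy
    (fun a ha b hb => by rw [← mul_assoc]; exact mul_mem_mul (hx a ha) hb)
    (fun _ _ h₁ h₂ => by rw [mul_add]; exact add_mem h₁ h₂)

lemma mul_ne_bot [NoZeroDivisors A] {I J : Submodule R A} (hI : I ≠ ⊥) (hJ : J ≠ ⊥) :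
    I * J ≠ ⊥ := by
  simpa [mul_eq_bot] using And.intro hI hJ

lemma one_ne_bot [Nontrivial A] : (1 : Submodule R A) ≠ ⊥ :=
  (Submodule.ne_bot_iff _).mpr ⟨1, one_le.mp le_rfl, one_ne_zero⟩

lemma pow_ne_bot [NoZeroDivisors A] {I : Submodule R A} (hI : I ≠ ⊥) (n : ℕ) : I ^ n ≠ ⊥ := by
  rw [← zero_eq_bot] at hI ⊢
  exact pow_ne_zero n hI

end Submodule

section TOperation

variable {R K : Type*} [CommRing R] [Field K] [Algebra R K]

lemma vOp_mono {A B : Submodule R K} (h : A ≤ B) : vOp A ≤ vOp B :=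
  Submodule.div_le_div_of_le_right (Submodule.div_le_div_of_le_right h)

lemma one_le_vOp_iff {A : Submodule R K} : 1 ≤ vOp A ↔ 1 / A ≤ 1 := by
  rw [vOp, Submodule.le_div_iff_mul_le, one_mul]

lemma vOp_one : vOp (1 : Submodule R K) = 1 := by
  rw [vOp, Submodule.one_div_one, Submodule.one_div_one]

lemma vOp_eq_one {A : Submodule R K} (hA : A ≤ 1) (h : 1 / A ≤ 1) : vOp A = 1 :=
  le_antisymm ((vOp_mono hA).trans_eq vOp_one) (one_le_vOp_iff.mpr h)

lemma tOp_eq_vOp_of_fg {A : Submodule R K} (hfg : A.FG) (hA : A ≠ ⊥) : tOp A = vOp A :=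
  le_antisymm (sSup_le fun _ ⟨_, _, _, hle, hG⟩ => hG ▸ vOp_mono hle)
    (le_sSup ⟨A, hfg, hA, le_rfl, rfl⟩)

lemma tOp_one : tOp (1 : Submodule R K) = 1 := by
  rw [tOp_eq_vOp_of_fg ⟨{1}, by simp [Submodule.one_eq_span]⟩ Submodule.one_ne_bot, vOp_one]

end TOperation

namespace SemistarOp

variable {R K : Type*} [CommRing R] [Field K] [Algebra R K] (s : SemistarOp R K)
  {A B E F : Submodule R K}

lemma map_ne_bot (hE : E ≠ ⊥) : s.toFun E ≠ ⊥ :=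
  fun h => hE (le_bot_iff.mp (h ▸ s.le_star' E hE))

lemma div_le_map_div (hE : E ≠ ⊥) (hF : F ≠ ⊥) : F / E ≤ s.toFun F / s.toFun E := by
  intro x hx y hy
  rcases eq_or_ne x 0 with rfl | hx0
  · simp
  have hxE : x • E ≤ F := by
    rintro _ ⟨e, he, rfl⟩
    exact hx e he
  have hxE0 : x • E ≠ ⊥ := fun h => hE (by
    rw [← inv_smul_smul₀ hx0 E, h]; simp)
  have hle : x • s.toFun E ≤ s.toFun F := s.smul' x hx0 E hE ▸ s.mono' _ _ hxE0 hF hxE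
  exact hle (Submodule.smul_mem_pointwise_smul y x _ hy)

lemma map_map_mul (hA : A ≠ ⊥) (hB : B ≠ ⊥) : s.toFun (s.toFun A * B) = s.toFun (A * B) := by
  have hAB := Submodule.mul_ne_bot hA hB
  have hsAB := Submodule.mul_ne_bot (s.map_ne_bot hA) hB
  have hle : s.toFun A * B ≤ s.toFun (A * B) := by
    rw [Submodule.mul_le]
    intro a ha b hb
    rw [mul_comm a b]
    exact s.div_le_map_div hA hAB (fun _ ha' => Submodule.mul_mem_mul_rev ha' hb) a ha
  refine le_antisymm ?_ (s.mono' _ _ hAB hsAB (mul_le_mul_left (s.le_star' A hA) B))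
  simpa [s.idem' _ hAB] using s.mono' _ _ hsAB (s.map_ne_bot hAB) hle

lemma map_mul_of_map_eq_map_one (hA : A ≠ ⊥) (h : s.toFun A = s.toFun 1) (hB : B ≠ ⊥) :
    s.toFun (A * B) = s.toFun B := by
  rw [← s.map_map_mul hA hB, h, s.map_map_mul Submodule.one_ne_bot hB, one_mul]

lemma map_pow_of_map_eq_map_one (hA : A ≠ ⊥) (h : s.toFun A = s.toFun 1) (n : ℕ) :
    s.toFun (A ^ n) = s.toFun 1 := by
  induction n with
  | zero => rw [pow_zero]
  | succ n ih => rw [pow_succ', s.map_mul_of_map_eq_map_one hA h (Submodule.pow_ne_bot hA n), ih]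

lemma one_div_le_map_one (hE : E ≠ ⊥) (h : s.toFun E = s.toFun 1) : 1 / E ≤ s.toFun 1 := by
  intro x hx
  have := s.div_le_map_div hE Submodule.one_ne_bot hx 1
    (h ▸ s.le_star' 1 Submodule.one_ne_bot (Submodule.one_le.mp le_rfl))
  rwa [mul_one] at this

lemma map_div_map_le_map_mul_div (hA : A ≠ ⊥) (hB : B ≠ ⊥) :
    s.toFun A / s.toFun A ≤ s.toFun (A * B) / s.toFun (A * B) := by
  have hsAB := Submodule.mul_ne_bot (s.map_ne_bot hA) hB
  rw [← s.map_map_mul hA hB]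
  exact Submodule.div_self_le_mul_div_mul_self.trans (s.div_le_map_div hsAB hsAB)

end SemistarOp

section SemistarIntClosure

variable {D K : Type*} [CommRing D] [Field K] [Algebra D K] (s : SemistarOp D K)

lemma exists_fg_forall_mem_div_of_finite {S : Set K} (hS : S.Finite)
    (h : ∀ x ∈ S, ∃ H : Submodule D K, H.FG ∧ H ≠ ⊥ ∧ x ∈ s.toFun H / s.toFun H) :
    ∃ H : Submodule D K, H.FG ∧ H ≠ ⊥ ∧ ∀ x ∈ S, x ∈ s.toFun H / s.toFun H := by
  induction S, hS using Set.Finite.induction_on with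
  | empty => exact ⟨1, ⟨{1}, by simp [Submodule.one_eq_span]⟩, Submodule.one_ne_bot, by simp⟩
  | @insert a S _ _ ih =>
    obtain ⟨H₁, hH₁, hH₁0, ha⟩ := h a (Set.mem_insert a S)
    obtain ⟨H₂, hH₂, hH₂0, hS⟩ := ih fun x hx => h x (Set.mem_insert_of_mem a hx)
    refine ⟨H₁ * H₂, hH₁.mul hH₂, Submodule.mul_ne_bot hH₁0 hH₂0, ?_⟩
    rintro x (rfl | hx)
    · exact s.map_div_map_le_map_mul_div hH₁0 hH₂0 ha
    · rw [mul_comm]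
      exact s.map_div_map_le_map_mul_div hH₂0 hH₁0 (hS x hx)

lemma mem_semistarIntClosure_iff {x : K} :
    x ∈ semistarIntClosure s ↔
      ∃ H : Submodule D K, H.FG ∧ H ≠ ⊥ ∧ x ∈ s.toFun H / s.toFun H := by
  refine ⟨fun hx => ?_, fun hx => Algebra.subset_adjoin hx⟩
  induction hx using Algebra.adjoin_induction with
  | mem y hy => exact hy
  | algebraMap r =>
    refine ⟨1, ⟨{1}, by simp [Submodule.one_eq_span]⟩, Submodule.one_ne_bot, fun y hy => ?_⟩
    rw [← Algebra.smul_def]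
    exact Submodule.smul_mem _ r hy
  | add y z _ _ hy hz =>
    obtain ⟨H, hH, hH0, hyz⟩ := exists_fg_forall_mem_div_of_finite s (Set.toFinite {y, z})
      (by rintro w (rfl | rfl) <;> assumption)
    exact ⟨H, hH, hH0,
      add_mem (hyz y (Set.mem_insert y _)) (hyz z (Set.mem_insert_of_mem y rfl))⟩
  | mul y z _ _ hy hz =>
    obtain ⟨H, hH, hH0, hyz⟩ := exists_fg_forall_mem_div_of_finite s (Set.toFinite {y, z})
      (by rintro w (rfl | rfl) <;> assumption)
    refine ⟨H, hH, hH0, fun w hw => ?_⟩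
    rw [mul_assoc]
    exact hyz y (Set.mem_insert y _) _ (hyz z (Set.mem_insert_of_mem y rfl) w hw)

lemma mem_semistarIntClosure_of_mul_mem {A : Submodule D K} (hA : A.FG) (hA0 : A ≠ ⊥)
    (hst : s.toFun A = s.toFun 1) {x : K} (hx : ∀ a ∈ A, x * a ∈ semistarIntClosure s) :
    x ∈ semistarIntClosure s := by
  obtain ⟨G, rfl⟩ := hA
  obtain ⟨H, hH, hH0, hGH⟩ := exists_fg_forall_mem_div_of_finite s (G.finite_toSet.image (x * ·))
    (by
      rintro _ ⟨g, hg, rfl⟩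
      exact (mem_semistarIntClosure_iff s).mp (hx g (Submodule.subset_span hg)))
  have hsH0 := s.map_ne_bot hH0
  have hxG : x ∈ s.toFun H / s.toFun H / Submodule.span D G :=
    Submodule.mem_div_span_iff.mpr fun g hg => hGH _ ⟨g, hg, rfl⟩
  rw [Submodule.div_div_eq_div_mul] at hxG
  have hxH := s.div_le_map_div (Submodule.mul_ne_bot hA0 hsH0) hsH0 hxG
  rw [s.map_mul_of_map_eq_map_one hA0 hst hsH0, s.idem' _ hH0] at hxH
  exact (mem_semistarIntClosure_iff s).mpr ⟨H, hH, hH0, hxH⟩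

end SemistarIntClosure

section CompleteIntegralClosure

variable {D K : Type*} [CommRing D] [CommRing K] [Algebra D K]

lemma IsAlmostIntegral.isFractional_adjoin_singleton {x : K} (hx : IsAlmostIntegral D x) :
    IsFractional D⁰ (Algebra.adjoin D {x}).toSubmodule := by
  obtain ⟨r, hr, h⟩ := hx
  rw [Algebra.adjoin_eq_span, ← Submonoid.powers_eq_closure,
    FractionalIdeal.isFractional_span_iff]
  exact ⟨r, hr, by rintro _ ⟨n, rfl⟩; exact h n⟩

lemma isFractional_adjoin_of_finite {S : Set K} (hS : S.Finite)
    (h : S ⊆ completeIntegralClosure D K) :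
    IsFractional D⁰ (Algebra.adjoin D S).toSubmodule := by
  induction S, hS using Set.Finite.induction_on with
  | empty =>
    rw [Algebra.adjoin_empty, Algebra.toSubmodule_bot]
    exact FractionalIdeal.isFractional_of_le_one 1 le_rfl
  | @insert a S _ _ ih =>
    rw [Set.insert_eq, Algebra.adjoin_union_coe_submodule]
    exact (IsAlmostIntegral.isFractional_adjoin_singleton (h (Set.mem_insert a S))).mul
      (ih fun x hx => h (Set.mem_insert_of_mem a hx))

lemma mem_completeIntegralClosure_of_mul_mem {A J : Submodule D K} (hA : A.FG)
    (hJ : IsFractional D⁰ J) (hAJ : ∀ n : ℕ, (1 : Submodule D K) / A ^ n ≤ J) {x : K}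
    (hx : ∀ a ∈ A, x * a ∈ completeIntegralClosure D K) :
    x ∈ completeIntegralClosure D K := by
  obtain ⟨G, rfl⟩ := hA
  set B := Algebra.adjoin D ((x * ·) '' G)
  obtain ⟨r, hr, hrB⟩ := isFractional_adjoin_of_finite (G.finite_toSet.image (x * ·))
    (by
      rintro _ ⟨g, hg, rfl⟩
      exact hx g (Submodule.subset_span hg))
  obtain ⟨c, hc, hcJ⟩ := hJ
  have hxB : x ∈ B.toSubmodule / Submodule.span D G :=
    Submodule.mem_div_span_iff.mpr fun g hg => Algebra.subset_adjoin ⟨g, hg, rfl⟩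
  refine ⟨c * r, mul_mem hc hr, fun n => ?_⟩
  have hrx : r • x ^ n ∈ (1 : Submodule D K) / Submodule.span D G ^ n := fun b hb => by
    obtain ⟨d, hd⟩ := hrB _ (Submodule.pow_mem_div_pow hxB n b hb)
    exact Submodule.mem_one.mpr ⟨d, by rw [hd, smul_mul_assoc]⟩
  obtain ⟨d, hd⟩ := hcJ _ (hAJ n hrx)
  exact ⟨d, by rw [hd, mul_smul]⟩

lemma isFractional_of_one_div_ne_bot [IsDomain D] {J : Submodule D K} (hJ : 1 ≤ J)
    (h : 1 / J ≠ ⊥) : IsFractional D⁰ J := by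
  obtain ⟨c, hc, hc0⟩ := (Submodule.ne_bot_iff _).mp h
  obtain ⟨r, rfl⟩ := Submodule.mem_one.mp (by simpa using hc 1 (hJ (Submodule.one_le.mp le_rfl)))
  refine ⟨r, mem_nonZeroDivisors_of_ne_zero fun hr => hc0 (by simp [hr]), fun y hy => ?_⟩
  obtain ⟨d, hd⟩ := Submodule.mem_one.mp (hc y hy)
  exact ⟨d, by rw [hd, Algebra.smul_def]⟩

end CompleteIntegralClosure

lemma completeIntClosure_eq_completeIntegralClosure {D K : Type*} [CommRing D] [IsDomain D]
    [Field K] [Algebra D K] :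
    completeIntClosure D K = completeIntegralClosure D K := by
  rw [completeIntClosure, ← Algebra.adjoin_eq (completeIntegralClosure D K)]
  congr 1
  ext x
  simp [mem_completeIntegralClosure, IsAlmostIntegral, mem_nonZeroDivisors_iff_ne_zero,
    Algebra.mem_bot, Algebra.smul_def]

section TLinked

variable {D K : Type*} [CommRing D] [Field K] [Algebra D K]

lemma idealSub_fg {F : Ideal D} (hF : F.FG) : (idealSub F : Submodule D K).FG :=
  Submodule.FG.map _ hF

lemma idealSub_ne_bot_s3 [IsFractionRing D K] {F : Ideal D} (hF : F ≠ ⊥) :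
    (idealSub F : Submodule D K) ≠ ⊥ := by
  obtain ⟨a, ha, ha0⟩ := (Submodule.ne_bot_iff _).mp hF
  exact (Submodule.ne_bot_iff _).mpr ⟨algebraMap D K a, Submodule.mem_map_of_mem ha,
    (map_ne_zero_iff _ (IsFractionRing.injective D K)).mpr ha0⟩

lemma tLinked_of_forall_mul_mem [IsFractionRing D K] {f : Submodule D K → Submodule D K}
    {T : Subalgebra D K}
    (h : ∀ F : Ideal D, F ≠ ⊥ → F.FG → f (idealSub F) = f 1 →
      ∀ x : K, (∀ a ∈ idealSub F, x * a ∈ T) → x ∈ T) :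
    TLinked f T := by
  intro F hF hFfg hst
  have hT : ∀ y : K, y ∈ (1 : Submodule T K) ↔ y ∈ T := fun y =>
    SetLike.ext_iff.mp (Subalgebra.restrictScalars_one D K T) y
  obtain ⟨G, hG⟩ := idealSub_fg (K := K) hFfg
  have hFT : extT T (idealSub F) = Submodule.span T G := by
    rw [extT, ← hG, Submodule.span_span_of_tower]
  have hle : idealSub F ≤ (Submodule.span T (G : Set K)).restrictScalars D :=
    hG ▸ Submodule.span_le_restrictScalars D T _
  have hFT0 : Submodule.span T (G : Set K) ≠ ⊥ := by
    obtain ⟨a, ha, ha0⟩ := (Submodule.ne_bot_iff _).mp (idealSub_ne_bot_s3 (K := K) hF)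
    exact (Submodule.ne_bot_iff _).mpr ⟨a, hle ha, ha0⟩
  have hFT1 : Submodule.span T (G : Set K) ≤ 1 := Submodule.span_le.mpr fun g hg => by
    obtain ⟨a, -, rfl⟩ : g ∈ idealSub F := hG ▸ Submodule.subset_span hg
    exact (hT _).mpr (T.algebraMap_mem a)
  have hdiv : 1 / Submodule.span T (G : Set K) ≤ 1 := fun x hx =>
    (hT x).mpr (h F hF hFfg hst x fun a ha => (hT _).mp (hx a (hle ha)))
  change tOp _ = tOp 1
  rw [hFT, tOp_one, tOp_eq_vOp_of_fg (Submodule.fg_span G.finite_toSet) hFT0,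
    vOp_eq_one hFT1 hdiv]

lemma semistarIntClosure_tLinked [IsFractionRing D K] (s : SemistarOp D K) :
    TLinked s.toFun (semistarIntClosure s) :=
  tLinked_of_forall_mul_mem fun _ hF hFfg hst _ =>
    mem_semistarIntClosure_of_mul_mem s (idealSub_fg hFfg) (idealSub_ne_bot_s3 hF) hst

lemma completeIntegralClosure_tLinked [IsDomain D] [IsFractionRing D K] (s : SemistarOp D K)
    (hs : (1 : Submodule D K) / s.toFun 1 ≠ ⊥) :
    TLinked s.toFun (completeIntegralClosure D K) :=
  tLinked_of_forall_mul_mem fun _ hF hFfg hst _ =>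
    mem_completeIntegralClosure_of_mul_mem (idealSub_fg hFfg)
      (isFractional_of_one_div_ne_bot (s.le_star' 1 Submodule.one_ne_bot) hs)
      fun n => s.one_div_le_map_one (Submodule.pow_ne_bot (idealSub_ne_bot_s3 hF) n)
        (s.map_pow_of_map_eq_map_one (idealSub_ne_bot_s3 hF) hst n)

lemma completeIntegralClosure_tLinked_tOp [IsFractionRing D K] :
    TLinked tOp (completeIntegralClosure D K) :=
  tLinked_of_forall_mul_mem fun F hF hFfg hst _ => by
    have hvOp : 1 ≤ vOp (idealSub F : Submodule D K) := by
      rw [← tOp_eq_vOp_of_fg (idealSub_fg hFfg) (idealSub_ne_bot_s3 hF), hst, tOp_one]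
    exact mem_completeIntegralClosure_of_mul_mem (idealSub_fg hFfg)
      (FractionalIdeal.isFractional_of_le_one 1 le_rfl)
      (Submodule.one_div_pow_le_one (one_le_vOp_iff.mp hvOp))

end TLinked

/-- **Corollary 3.6.** `D^{[⋆]}` is `t`-linked to `(D,⋆)`; if `(D : D^⋆) ≠ 0`, the complete
integral closure of `D` is `t`-linked to `(D,⋆)`; and the complete integral closure of `D`
is always `t`-linked to `D` (i.e. `(t_D, t)`-linked). -/
theorem semistarIntClosure_tLinked_and_completeIntClosure_tLinked
    {D K : Type*} [CommRing D] [IsDomain D] [Field K] [Algebra D K] [IsFractionRing D K]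
    (s : SemistarOp D K) :
    TLinked s.toFun (semistarIntClosure s) ∧
    ((1 : Submodule D K) / s.toFun 1 ≠ ⊥ → TLinked s.toFun (completeIntClosure D K)) ∧
    TLinked (tOp (R := D) (K := K)) (completeIntClosure D K) := by
  rw [completeIntClosure_eq_completeIntegralClosure]
  exact ⟨semistarIntClosure_tLinked s, completeIntegralClosure_tLinked s,
    completeIntegralClosure_tLinked_tOp⟩
end

section
/- Let D be an integral domain with quotient field K, ⋆ a semistar operation on D, and T an overring of D. Then the map ℓ = ℓ_{⋆,T}, defined by E^{ℓ} := ∩{E T_{D∖P} : P a quasi-⋆_f-prime ideal of D} for each nonzero T-submodule E of K, is a semistar operation on T, and it is stable: (E ∩ F)^{ℓ} = E^{ℓ} ∩ F^{ℓ} for all nonzero T-submodules E, F of K. -/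
open Pointwise

/-! For a prime `P` of `D`, the set `{x ∈ K : r x ∈ E for some r ∉ P}` spanned in `ellOp` is
already a `T`-submodule, the `(D ∖ P)`-saturation of `E`; so `E^ℓ` is an intersection of
saturations of `E`. Saturation by any multiplicative set is extensive, monotone, idempotent,
commutes with `∩`, and satisfies `x • E_S ≤ (x • E)_S`; all of this survives intersections,
and applying the last inequality to `x⁻¹` as well gives `(x • E)^ℓ = x • E^ℓ`. -/

namespace Submodule

section CommRing

variable {D K : Type*} [CommRing D] [CommRing K] [Algebra D K] {T : Subalgebra D K}
  {E F : Submodule T K}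

def saturation (E : Submodule T K) (S : Submonoid D) : Submodule T K where
  carrier := {x | ∃ s ∈ S, s • x ∈ E}
  add_mem' := by
    rintro a b ⟨s, hs, hsa⟩ ⟨t, ht, htb⟩
    refine ⟨t * s, S.mul_mem ht hs, ?_⟩
    rw [smul_add, mul_smul, mul_comm, mul_smul]
    exact E.add_mem (E.smul_of_tower_mem t hsa) (E.smul_of_tower_mem s htb)
  zero_mem' := ⟨1, S.one_mem, by simp⟩
  smul_mem' := by
    rintro c x ⟨s, hs, hsx⟩
    exact ⟨s, hs, by rw [smul_comm]; exact E.smul_mem c hsx⟩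

section Saturation

variable {S : Submonoid D}

theorem mem_saturation {x : K} : x ∈ E.saturation S ↔ ∃ s ∈ S, s • x ∈ E := Iff.rfl

theorem le_saturation : E ≤ E.saturation S := fun x hx => ⟨1, S.one_mem, by simpa⟩

theorem saturation_mono (h : E ≤ F) : E.saturation S ≤ F.saturation S :=
  fun _ ⟨s, hs, hsx⟩ => ⟨s, hs, h hsx⟩

theorem saturation_saturation : (E.saturation S).saturation S = E.saturation S := by
  refine le_antisymm (fun x ⟨s, hs, t, ht, htsx⟩ => ⟨t * s, S.mul_mem ht hs, ?_⟩) le_saturation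
  rwa [mul_smul]

theorem saturation_inf : (E ⊓ F).saturation S = E.saturation S ⊓ F.saturation S := by
  refine le_antisymm (le_inf (saturation_mono inf_le_left) (saturation_mono inf_le_right)) ?_
  rintro x ⟨⟨s, hs, hsx⟩, ⟨t, ht, htx⟩⟩
  refine ⟨t * s, S.mul_mem ht hs, ?_, ?_⟩
  · rw [mul_smul]; exact E.smul_of_tower_mem t hsx
  · rw [mul_comm, mul_smul]; exact F.smul_of_tower_mem s htx

theorem smul_saturation_le (x : K) : x • E.saturation S ≤ (x • E).saturation S := by
  intro z hz
  obtain ⟨y, ⟨s, hs, hsy⟩, rfl⟩ := (mem_smul_pointwise_iff_exists z x _).mp hz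
  exact ⟨s, hs, by rw [smul_comm]; exact smul_mem_pointwise_smul _ x E hsy⟩

end Saturation

def iInfSaturation {ι : Sort*} (E : Submodule T K) (S : ι → Submonoid D) : Submodule T K :=
  ⨅ i, E.saturation (S i)

variable {ι : Sort*} {S : ι → Submonoid D}

theorem le_iInfSaturation : E ≤ E.iInfSaturation S := le_iInf fun _ => le_saturation

theorem iInfSaturation_mono (h : E ≤ F) : E.iInfSaturation S ≤ F.iInfSaturation S :=
  iInf_mono fun _ => saturation_mono h

theorem iInfSaturation_iInfSaturation :
    (E.iInfSaturation S).iInfSaturation S = E.iInfSaturation S :=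
  le_antisymm
    (iInf_mono fun i => (saturation_mono (iInf_le _ i)).trans_eq saturation_saturation)
    le_iInfSaturation

theorem iInfSaturation_inf :
    (E ⊓ F).iInfSaturation S = E.iInfSaturation S ⊓ F.iInfSaturation S := by
  simp only [iInfSaturation, saturation_inf, iInf_inf_eq]

theorem smul_iInfSaturation_le (x : K) : x • E.iInfSaturation S ≤ (x • E).iInfSaturation S :=
  le_iInf fun i => (smul_mono_right x (iInf_le _ i)).trans (smul_saturation_le x)

end CommRing

theorem iInfSaturation_smul {D K : Type*} [CommRing D] [Field K] [Algebra D K]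
    {T : Subalgebra D K} {ι : Sort*} {S : ι → Submonoid D} {E : Submodule T K} {x : K}
    (hx : x ≠ 0) : (x • E).iInfSaturation S = x • E.iInfSaturation S := by
  refine le_antisymm ?_ (smul_iInfSaturation_le x)
  calc (x • E).iInfSaturation S = x • x⁻¹ • (x • E).iInfSaturation S :=
        (smul_inv_smul₀ hx _).symm
    _ ≤ x • (x⁻¹ • x • E).iInfSaturation S := smul_mono_right x (smul_iInfSaturation_le x⁻¹)
    _ = x • E.iInfSaturation S := by rw [inv_smul_smul₀ hx]

end Submodule

section Ell

variable {D K : Type*} [CommRing D] [Field K] [Algebra D K]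

def quasiPrimeCompl (f : Submodule D K → Submodule D K)
    (P : {P : Ideal D // QuasiPrime (starF f) P}) : Submonoid D :=
  haveI := P.2.2; P.1.primeCompl

theorem ellOp_eq_iInfSaturation (f : Submodule D K → Submodule D K) (T : Subalgebra D K)
    (E : Submodule T K) : ellOp f T E = E.iInfSaturation (quasiPrimeCompl f) := by
  rw [ellOp, Submodule.iInfSaturation, iInf_subtype']
  refine iInf_congr fun P => ?_
  have : {x : K | ∃ r : D, r ∉ P.1 ∧ algebraMap D K r * x ∈ E} =
      E.saturation (quasiPrimeCompl f P) := by
    ext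
    simp [Submodule.mem_saturation, quasiPrimeCompl, Ideal.primeCompl, Algebra.smul_def]
  rw [this, Submodule.span_eq]

end Ell

theorem ellOp_is_stable_semistar_general
    {D K : Type*} [CommRing D] [Field K] [Algebra D K]
    (s : SemistarOp D K) (T : Subalgebra D K) :
    (∀ x : K, x ≠ 0 → ∀ E : Submodule ↥T K, E ≠ ⊥ →
        ellOp s.toFun T (x • E) = x • ellOp s.toFun T E) ∧
    (∀ E F : Submodule ↥T K, E ≠ ⊥ → F ≠ ⊥ → E ≤ F →
        ellOp s.toFun T E ≤ ellOp s.toFun T F) ∧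
    (∀ E : Submodule ↥T K, E ≠ ⊥ → E ≤ ellOp s.toFun T E) ∧
    (∀ E : Submodule ↥T K, E ≠ ⊥ →
        ellOp s.toFun T (ellOp s.toFun T E) = ellOp s.toFun T E) ∧
    (∀ E F : Submodule ↥T K, E ≠ ⊥ → F ≠ ⊥ →
        ellOp s.toFun T (E ⊓ F) = ellOp s.toFun T E ⊓ ellOp s.toFun T F) := by
  simp only [ellOp_eq_iInfSaturation]
  exact ⟨fun _ hx _ _ => Submodule.iInfSaturation_smul hx,
    fun _ _ _ _ => Submodule.iInfSaturation_mono,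
    fun _ _ => Submodule.le_iInfSaturation,
    fun _ _ => Submodule.iInfSaturation_iInfSaturation,
    fun _ _ _ _ => Submodule.iInfSaturation_inf⟩

/-- **Proposition 3.10 (1).** The map `ℓ = ℓ_{⋆,T}` is a (stable) semistar operation on
`T`: it satisfies (⋆₁), (⋆₂), (⋆₃), and `(E ∩ F)^ℓ = E^ℓ ∩ F^ℓ`. -/
theorem ellOp_is_stable_semistar
    {D K : Type*} [CommRing D] [IsDomain D] [Field K] [Algebra D K] [IsFractionRing D K]
    (s : SemistarOp D K) (T : Subalgebra D K) :
    (∀ x : K, x ≠ 0 → ∀ E : Submodule ↥T K, E ≠ ⊥ →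
        ellOp s.toFun T (x • E) = x • ellOp s.toFun T E) ∧
    (∀ E F : Submodule ↥T K, E ≠ ⊥ → F ≠ ⊥ → E ≤ F →
        ellOp s.toFun T E ≤ ellOp s.toFun T F) ∧
    (∀ E : Submodule ↥T K, E ≠ ⊥ → E ≤ ellOp s.toFun T E) ∧
    (∀ E : Submodule ↥T K, E ≠ ⊥ →
        ellOp s.toFun T (ellOp s.toFun T E) = ellOp s.toFun T E) ∧
    (∀ E F : Submodule ↥T K, E ≠ ⊥ → F ≠ ⊥ →
        ellOp s.toFun T (E ⊓ F) = ellOp s.toFun T E ⊓ ellOp s.toFun T F) :=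
  ellOp_is_stable_semistar_general s T
end
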